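/- arXiv:1703.00405 — 5 statements merged into one kernel-verified Lean document; each statement's English description precedes it below -/
import Mathlib

section
/- A Metzler matrix A is Hurwitz stable (all eigenvalues have negative real part) if and only if there exists a positive vector v ∈ ℝ^n_{>0} such that vᵀA < 0 componentwise. -/
open Matrix Finset

variable {n : ℕ}

def IsMetzler {n : ℕ} (A : Matrix (Fin n) (Fin n) ℝ) : Prop :=
  ∀ i j : Fin n, i ≠ j → 0 ≤ A i j

def IsHurwitz {n : ℕ} (A : Matrix (Fin n) (Fin n) ℝ) : Prop :=
  ∀ μ ∈ spectrum ℂ (A.map (fun x => (x : ℂ))), μ.re < 0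

lemma vecMul_smul_one (x : Fin n → ℂ) (μ : ℂ) :
    x ᵥ* (μ • (1 : Matrix (Fin n) (Fin n) ℂ)) = μ • x := by
  ext j
  simp [Matrix.vecMul, dotProduct, Matrix.one_apply, mul_comm]

lemma spec_iff_det (M : Matrix (Fin n) (Fin n) ℂ) (μ : ℂ) :
    μ ∈ spectrum ℂ M ↔ (μ • (1 : Matrix (Fin n) (Fin n) ℂ) - M).det = 0 := by
  rw [spectrum.mem_iff, Matrix.isUnit_iff_isUnit_det, isUnit_iff_ne_zero, not_not,
    Algebra.algebraMap_eq_smul_one]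

lemma spec_iff_eig (M : Matrix (Fin n) (Fin n) ℂ) (μ : ℂ) :
    μ ∈ spectrum ℂ M ↔ ∃ x ≠ 0, x ᵥ* M = μ • x := by
  rw [spec_iff_det, ← Matrix.exists_vecMul_eq_zero_iff]
  constructor
  · rintro ⟨x, hx, h⟩
    rw [Matrix.vecMul_sub, vecMul_smul_one, sub_eq_zero] at h
    exact ⟨x, hx, h.symm⟩
  · rintro ⟨x, hx, h⟩
    exact ⟨x, hx, by rw [Matrix.vecMul_sub, vecMul_smul_one, h, sub_self]⟩

lemma easy_dir (A : Matrix (Fin n) (Fin n) ℝ) (hA : IsMetzler A) (v : Fin n → ℝ)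
    (hv : ∀ i, 0 < v i) (hvA : ∀ j, Matrix.vecMul v A j < 0) : IsHurwitz A := by
  intro μ hμ
  obtain ⟨x, hx, hxA⟩ := (spec_iff_eig _ μ).mp hμ
  obtain ⟨i0, hi0'⟩ := Function.ne_iff.mp hx
  obtain ⟨j, -, hj⟩ := Finset.exists_max_image Finset.univ (fun i => ‖x i‖ / v i)
    ⟨i0, Finset.mem_univ _⟩
  set m : ℝ := ‖x j‖ / v j with hm
  have hmpos : 0 < m := lt_of_lt_of_le (div_pos (norm_pos_iff.mpr hi0') (hv i0))
    (hj i0 (Finset.mem_univ _))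
  have hbound : ∀ i, ‖x i‖ ≤ m * v i := fun i => by
    have := hj i (Finset.mem_univ _)
    rwa [div_le_iff₀ (hv i)] at this
  have hxj : ‖x j‖ = m * v j := by
    rw [hm, div_mul_cancel₀ _ (ne_of_gt (hv j))]
  have heq : ∑ i, x i * (A i j : ℂ) = μ * x j := by
    have := congrFun hxA j
    simpa [Matrix.vecMul, dotProduct, Matrix.map_apply] using this
  have key : (μ - (A j j : ℂ)) * x j = ∑ i ∈ Finset.univ.erase j, x i * (A i j : ℂ) := by
    have h2 := Finset.sum_erase_add Finset.univ (fun i => x i * (A i j : ℂ)) (Finset.mem_univ j)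
    rw [heq] at h2
    linear_combination -h2
  have hnorm : ‖μ - (A j j : ℂ)‖ * (m * v j) ≤ m * ∑ i ∈ Finset.univ.erase j, v i * A i j := by
    calc ‖μ - (A j j : ℂ)‖ * (m * v j) = ‖(μ - (A j j : ℂ)) * x j‖ := by
          rw [norm_mul, hxj]
      _ = ‖∑ i ∈ Finset.univ.erase j, x i * (A i j : ℂ)‖ := by rw [key]
      _ ≤ ∑ i ∈ Finset.univ.erase j, ‖x i * (A i j : ℂ)‖ := norm_sum_le _ _
      _ = ∑ i ∈ Finset.univ.erase j, ‖x i‖ * A i j := by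
          refine Finset.sum_congr rfl fun i hi => ?_
          rw [norm_mul, Complex.norm_real, Real.norm_eq_abs,
            abs_of_nonneg (hA i j (Finset.ne_of_mem_erase hi))]
      _ ≤ ∑ i ∈ Finset.univ.erase j, (m * v i) * A i j := by
          refine Finset.sum_le_sum fun i hi => ?_
          exact mul_le_mul_of_nonneg_right (hbound i) (hA i j (Finset.ne_of_mem_erase hi))
      _ = m * ∑ i ∈ Finset.univ.erase j, v i * A i j := by
          rw [Finset.mul_sum]; refine Finset.sum_congr rfl fun i _ => by ring
  have hsum : ∑ i ∈ Finset.univ.erase j, v i * A i j < -(v j * A j j) := by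
    have h3 := hvA j
    simp only [Matrix.vecMul, dotProduct] at h3
    have h4 : ∑ i ∈ Finset.univ.erase j, v i * A i j + v j * A j j = ∑ i, v i * A i j :=
      Finset.sum_erase_add Finset.univ (fun i => v i * A i j) (Finset.mem_univ j)
    linarith [h3, h4]
  have hfin : ‖μ - (A j j : ℂ)‖ * (m * v j) < m * -(v j * A j j) :=
    lt_of_le_of_lt hnorm (by exact mul_lt_mul_of_pos_left hsum hmpos)
  have hre : μ.re - A j j ≤ ‖μ - (A j j : ℂ)‖ := by
    have := Complex.re_le_norm (μ - (A j j : ℂ))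
    simpa [Complex.sub_re, Complex.ofReal_re] using this
  nlinarith [mul_pos hmpos (hv j), norm_nonneg (μ - (A j j : ℂ)), hv j, hmpos]

attribute [local instance] Matrix.linftyOpNormedRing Matrix.linftyOpNormedAlgebra

noncomputable instance : CompleteSpace (Matrix (Fin n) (Fin n) ℂ) :=
  FiniteDimensional.complete ℂ _

noncomputable instance : CompleteSpace (Matrix (Fin n) (Fin n) ℝ) :=
  FiniteDimensional.complete ℝ _

lemma map_norm_eq (X : Matrix (Fin n) (Fin n) ℝ) :
    ‖X.map (fun x => (x : ℂ))‖ = ‖X‖ := by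
  rw [Matrix.linfty_opNorm_def, Matrix.linfty_opNorm_def]
  congr 1
  refine Finset.sup_congr rfl fun i _ => ?_
  refine Finset.sum_congr rfl fun j _ => ?_
  simp [Matrix.map_apply]

lemma spec_shift (M : Matrix (Fin n) (Fin n) ℂ) {s : ℂ} (hs : s ≠ 0) (μ : ℂ) :
    μ ∈ spectrum ℂ (1 + s⁻¹ • M) ↔ s * (μ - 1) ∈ spectrum ℂ M := by
  rw [spec_iff_det, spec_iff_det]
  have h1 : μ • (1 : Matrix (Fin n) (Fin n) ℂ) - (1 + s⁻¹ • M)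
      = s⁻¹ • ((s * (μ - 1)) • (1 : Matrix (Fin n) (Fin n) ℂ) - M) := by
    rw [smul_sub, smul_smul]
    rw [show s⁻¹ * (s * (μ - 1)) = μ - 1 by field_simp]
    rw [sub_smul, one_smul]
    abel
  rw [h1, Matrix.det_smul]
  simp only [mul_eq_zero, pow_eq_zero_iff', inv_eq_zero]
  constructor
  · rintro (⟨rfl, -⟩ | h)
    · exact absurd rfl hs
    · exact h
  · exact fun h => Or.inr h

lemma spectralRadius_lt_one (M : Matrix (Fin n) (Fin n) ℂ)
    (h : ∀ μ ∈ spectrum ℂ M, ‖μ‖ < 1) : spectralRadius ℂ M < 1 := by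
  rcases Set.eq_empty_or_nonempty (spectrum ℂ M) with hK | hK
  · simp [spectralRadius, hK]
  · obtain ⟨μ0, hμ0, hmax⟩ := (spectrum.isCompact M).exists_isMaxOn hK
      continuous_norm.continuousOn
    have hle : spectralRadius ℂ M ≤ (‖μ0‖₊ : ENNReal) := by
      rw [spectralRadius]
      exact iSup₂_le fun μ hμ => ENNReal.coe_le_coe.mpr (by exact_mod_cast hmax hμ)
    refine lt_of_le_of_lt hle ?_
    rw [← ENNReal.coe_one, ENNReal.coe_lt_coe]
    exact_mod_cast h μ0 hμ0

lemma exists_pow_norm_lt (M : Matrix (Fin n) (Fin n) ℂ) (h : spectralRadius ℂ M < 1) :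
    ∃ N : ℕ, 0 < N ∧ ‖M ^ N‖ < 1 := by
  have ht := spectrum.pow_nnnorm_pow_one_div_tendsto_nhds_spectralRadius M
  have hev := Filter.Tendsto.eventually_lt_const h ht
  obtain ⟨N, hN1, hN2⟩ := (hev.and (Filter.eventually_ge_atTop 1)).exists
  refine ⟨N, hN2, ?_⟩
  by_contra hc
  push_neg at hc
  have h1 : (1 : ENNReal) ≤ ((‖M ^ N‖₊ : NNReal) : ENNReal) := by
    rw [← ENNReal.coe_one, ENNReal.coe_le_coe]
    exact_mod_cast hc
  have h2 := ENNReal.rpow_le_rpow h1 (by positivity : (0:ℝ) ≤ 1 / N)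
  rw [ENNReal.one_rpow] at h2
  exact absurd hN1 (not_lt.mpr h2)

def EntNN (X : Matrix (Fin n) (Fin n) ℝ) : Prop := ∀ i j, 0 ≤ X i j

lemma EntNN.mul {X Y : Matrix (Fin n) (Fin n) ℝ} (hX : EntNN X) (hY : EntNN Y) :
    EntNN (X * Y) := fun i j => by
  rw [Matrix.mul_apply]
  exact Finset.sum_nonneg fun k _ => mul_nonneg (hX i k) (hY k j)

lemma EntNN.pow {X : Matrix (Fin n) (Fin n) ℝ} (hX : EntNN X) (k : ℕ) : EntNN (X ^ k) := by
  induction k with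
  | zero => intro i j; rw [pow_zero]; by_cases h : i = j <;> simp [Matrix.one_apply, h]
  | succ m ih => rw [pow_succ]; exact ih.mul hX

lemma entry_tsum (f : ℕ → Matrix (Fin n) (Fin n) ℝ) (hf : Summable f) (i j : Fin n) :
    (∑' k, f k) i j = ∑' k, f k i j := by
  let L : Matrix (Fin n) (Fin n) ℝ →ₗ[ℝ] ℝ :=
    { toFun := fun X => X i j
      map_add' := fun X Y => rfl
      map_smul' := fun c X => rfl }
  exact ((hf.hasSum.mapL L.toContinuousLinearMap).tsum_eq).symm

lemma vecMul_smul_one' (x : Fin n → ℝ) (c : ℝ) :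
    x ᵥ* (c • (1 : Matrix (Fin n) (Fin n) ℝ)) = c • x := by
  ext j
  simp [Matrix.vecMul, dotProduct, Matrix.one_apply, mul_comm]

lemma hard_dir (A : Matrix (Fin n) (Fin n) ℝ) (hA : IsMetzler A) (hH : IsHurwitz A) :
    ∃ v : Fin n → ℝ, (∀ i, 0 < v i) ∧ ∀ j, Matrix.vecMul v A j < 0 := by
  set Mc := A.map (fun x => (x : ℂ)) with hMc
  obtain ⟨C, hC0, hC⟩ : ∃ C : ℝ, 0 ≤ C ∧ ∀ μ ∈ spectrum ℂ Mc, ‖μ‖ ^ 2 ≤ C * (-μ.re) := by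
    rcases Set.eq_empty_or_nonempty (spectrum ℂ Mc) with hK | hK
    · exact ⟨0, le_refl 0, by simp [hK]⟩
    · have hcont : ContinuousOn (fun μ : ℂ => ‖μ‖ ^ 2 / (-μ.re)) (spectrum ℂ Mc) := by
        refine ContinuousOn.div ((continuous_norm.pow 2).continuousOn)
          ((Complex.continuous_re.neg).continuousOn) fun μ hμ => ?_
        exact ne_of_gt (neg_pos.mpr (hH μ hμ))
      obtain ⟨μ0, hμ0, hmax⟩ := (spectrum.isCompact Mc).exists_isMaxOn hK hcont
      refine ⟨max (‖μ0‖ ^ 2 / (-μ0.re)) 0, le_max_right _ _, fun μ hμ => ?_⟩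
      have hpos : 0 < -μ.re := neg_pos.mpr (hH μ hμ)
      have h1 : ‖μ‖ ^ 2 / (-μ.re) ≤ max (‖μ0‖ ^ 2 / (-μ0.re)) 0 :=
        le_trans (hmax hμ) (le_max_left _ _)
      calc ‖μ‖ ^ 2 = ‖μ‖ ^ 2 / (-μ.re) * (-μ.re) := (div_mul_cancel₀ _ hpos.ne').symm
        _ ≤ max (‖μ0‖ ^ 2 / (-μ0.re)) 0 * (-μ.re) :=
            mul_le_mul_of_nonneg_right h1 hpos.le
  have hdiagsum : (0:ℝ) ≤ ∑ i, |A i i| := Finset.sum_nonneg fun i _ => abs_nonneg _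
  set s : ℝ := 1 + C + ∑ i, |A i i| with hsdef
  have hs0 : 0 < s := by rw [hsdef]; linarith
  have hsC : C < s := by rw [hsdef]; linarith
  have hsd : ∀ i, -A i i ≤ s := fun i => by
    have h1 : |A i i| ≤ ∑ k, |A k k| :=
      Finset.single_le_sum (f := fun k => |A k k|) (fun k _ => abs_nonneg _) (Finset.mem_univ i)
    have h2 : -A i i ≤ |A i i| := neg_le_abs _
    rw [hsdef]; linarith
  set Q : Matrix (Fin n) (Fin n) ℝ := 1 + s⁻¹ • A with hQdef
  have hQnn : EntNN Q := by
    intro i j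
    by_cases h : i = j
    · subst h
      have h1 : 0 ≤ A i i + s := by linarith [hsd i]
      have h2 : 0 ≤ s⁻¹ * (A i i + s) := mul_nonneg (inv_nonneg.mpr hs0.le) h1
      have h3 : s⁻¹ * s = 1 := inv_mul_cancel₀ hs0.ne'
      simp only [hQdef, Matrix.add_apply, Matrix.one_apply_eq, Matrix.smul_apply, smul_eq_mul]
      nlinarith
    · simp only [hQdef, Matrix.add_apply, Matrix.one_apply_ne h, Matrix.smul_apply, smul_eq_mul,
        zero_add]
      exact mul_nonneg (inv_nonneg.mpr hs0.le) (hA i j h)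
  set Qc := Q.map (fun x => (x : ℂ)) with hQcdef
  have hQc : Qc = 1 + ((s : ℂ))⁻¹ • Mc := by
    ext i j
    by_cases h : i = j <;>
      simp [hQcdef, hQdef, hMc, Matrix.map_apply, Matrix.add_apply, Matrix.smul_apply,
        Matrix.one_apply, h] <;> push_cast <;> ring
  have hsne : (s : ℂ) ≠ 0 := by exact_mod_cast hs0.ne'
  have hspec : ∀ μ ∈ spectrum ℂ Qc, ‖μ‖ < 1 := by
    intro μ hμ
    rw [hQc, spec_shift Mc hsne] at hμ
    set ν := (s : ℂ) * (μ - 1) with hν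
    have hν2 := hC ν hμ
    have hνre : ν.re < 0 := hH ν hμ
    have hsum : ‖ν‖ ^ 2 < 2 * s * (-ν.re) := by nlinarith
    have e1 : ∀ z : ℂ, ‖z‖ ^ 2 = z.re ^ 2 + z.im ^ 2 := fun z => by
      rw [Complex.sq_norm, Complex.normSq_apply]; ring
    have hns : ‖ν + s‖ ^ 2 = ‖ν‖ ^ 2 + 2 * s * ν.re + s ^ 2 := by
      rw [e1, e1]
      simp [Complex.add_re, Complex.add_im, Complex.ofReal_re, Complex.ofReal_im]
      ring
    have h3 : ‖ν + (s:ℂ)‖ ^ 2 < s ^ 2 := by rw [hns]; nlinarith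
    have h4 : ‖ν + (s:ℂ)‖ < s := by nlinarith [norm_nonneg (ν + (s:ℂ))]
    have h5 : ν + (s:ℂ) = (s:ℂ) * μ := by rw [hν]; ring
    rw [h5, norm_mul, Complex.norm_real, Real.norm_eq_abs, abs_of_pos hs0] at h4
    nlinarith
  obtain ⟨N, hN0, hNlt⟩ := exists_pow_norm_lt Qc (spectralRadius_lt_one Qc hspec)
  have hmapQ : (Q ^ N).map (fun x => (x : ℂ)) = Qc ^ N := by
    have h := map_pow (Complex.ofRealHom.mapMatrix (m := Fin n)) Q N
    simp only [RingHom.mapMatrix_apply] at h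
    exact h
  have hQN : ‖Q ^ N‖ < 1 := by
    rw [← map_norm_eq, hmapQ]; exact hNlt
  set T := Q ^ N with hT
  have hTnn : EntNN T := hQnn.pow N
  have hsummable : Summable (fun k => T ^ k) := summable_geometric_of_norm_lt_one hQN
  set R := ∑' k, T ^ k with hR
  have hRnn : EntNN R := fun i j => by
    rw [hR, entry_tsum _ hsummable]
    exact tsum_nonneg fun k => (hTnn.pow k) i j
  have h1R : (1 - T) * R = 1 := mul_neg_geom_series T hQN
  set G := (∑ k ∈ Finset.range N, Q ^ k) * R with hG
  have hsumnn : EntNN (∑ k ∈ Finset.range N, Q ^ k) := fun i j => by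
    rw [Matrix.sum_apply]
    exact Finset.sum_nonneg fun k _ => (hQnn.pow k) i j
  have hGnn : EntNN G := hsumnn.mul hRnn
  have hQG : (1 - Q) * G = 1 := by
    have hgs : (1 - Q) * (∑ k ∈ Finset.range N, Q ^ k) = 1 - Q ^ N := by
      have h := geom_sum_mul Q N
      have hcomm : (1 - Q) * (∑ k ∈ Finset.range N, Q ^ k)
          = (∑ k ∈ Finset.range N, Q ^ k) * (1 - Q) := by
        rw [mul_sub, sub_mul, mul_one, one_mul]
        congr 1
        rw [Finset.mul_sum, Finset.sum_mul]
        exact Finset.sum_congr rfl fun k _ => by rw [← pow_succ, ← pow_succ']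
      rw [hcomm]
      have : (∑ k ∈ Finset.range N, Q ^ k) * (1 - Q)
          = -((∑ k ∈ Finset.range N, Q ^ k) * (Q - 1)) := by
        rw [← mul_neg, neg_sub]
      rw [this, h, neg_sub]
    rw [hG, ← mul_assoc, hgs, ← hT, h1R]
  have hGeq : G = 1 + Q * G := by
    have h := hQG
    rw [sub_mul, one_mul, sub_eq_iff_eq_add] at h
    exact h
  have hGd : ∀ i, 1 ≤ G i i := fun i => by
    conv_rhs => rw [hGeq]
    have := (hQnn.mul hGnn) i i
    simp only [Matrix.add_apply, Matrix.one_apply_eq]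
    linarith
  have hGA : G * A = (-s) • 1 := by
    have h1 : (1 : Matrix (Fin n) (Fin n) ℝ) - Q = (-s⁻¹) • A := by
      rw [hQdef, neg_smul]; abel
    have h2 := mul_eq_one_comm.mp hQG
    rw [h1, Matrix.mul_smul] at h2
    have h3 := congrArg (fun X => (-s : ℝ) • X) h2
    simp only [smul_smul] at h3
    rw [show (-s : ℝ) * -s⁻¹ = 1 by field_simp, one_smul] at h3
    exact h3
  refine ⟨fun i => s⁻¹ * ∑ k, G k i, fun i => ?_, fun j => ?_⟩
  · have h1 : G i i ≤ ∑ k, G k i :=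
      Finset.single_le_sum (f := fun k => G k i) (fun k _ => hGnn k i) (Finset.mem_univ i)
    have h2 : (1:ℝ) ≤ ∑ k, G k i := le_trans (hGd i) h1
    have := inv_pos.mpr hs0
    nlinarith
  · have hone : (fun i => s⁻¹ * ∑ k, G k i) = s⁻¹ • ((fun _ => (1:ℝ)) ᵥ* G) := by
      ext i
      simp [Matrix.vecMul, dotProduct]
    rw [hone, Matrix.smul_vecMul, Matrix.vecMul_vecMul, hGA, vecMul_smul_one']
    simp only [Pi.smul_apply, smul_eq_mul]
    rw [show s⁻¹ * (-s * 1) = -1 by field_simp]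
    norm_num

theorem stmt1 {n : ℕ} (A : Matrix (Fin n) (Fin n) ℝ) (hA : IsMetzler A) :
    IsHurwitz A ↔ ∃ v : Fin n → ℝ, (∀ i, 0 < v i) ∧ ∀ j, Matrix.vecMul v A j < 0 := by
  constructor
  · exact fun hH => hard_dir A hA hH
  · rintro ⟨v, hv, hvA⟩
    exact easy_dir A hA v hv hvA
end

section
/- A nonnegative square matrix M is Schur stable (spectral radius less than 1) if and only if there exists a positive vector μ ∈ ℝ^n_{>0} such that μᵀ(M − I) < 0 componentwise. -/
open Matrix
open scoped ENNReal

noncomputable def specRad {n : ℕ} (M : Matrix (Fin n) (Fin n) ℝ) : ℝ :=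
  (spectralRadius ℂ (M.map (fun x => (x : ℂ)))).toReal

section Aux

variable {n : ℕ}

private lemma map_pow_aux (M : Matrix (Fin n) (Fin n) ℝ) (k : ℕ) :
    (M.map (fun x => (x : ℂ))) ^ k = (M ^ k).map (fun x => (x : ℂ)) := by
  have h : ∀ P : Matrix (Fin n) (Fin n) ℝ, P.map (fun x => (x : ℂ)) = P.map ⇑Complex.ofRealHom :=
    fun _ => rfl
  induction k with
  | zero =>
      simp only [pow_zero, h]
      exact (Matrix.map_one _ (map_zero _) (map_one _)).symm
  | succ k ih =>
      rw [pow_succ, pow_succ, ih, h, h, h, ← Matrix.map_mul]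

private lemma pow_nonneg_aux (M : Matrix (Fin n) (Fin n) ℝ) (hM : ∀ i j, 0 ≤ M i j) (k : ℕ) :
    ∀ i j, 0 ≤ (M ^ k) i j := by
  induction k with
  | zero =>
      intro i j
      rw [pow_zero]
      by_cases h : i = j <;> simp [Matrix.one_apply, h]
  | succ k ih =>
      intro i j
      rw [pow_succ, Matrix.mul_apply]
      exact Finset.sum_nonneg fun l _ => mul_nonneg (ih i l) (hM l j)

/-- The hard "only if" direction: small spectral radius gives a linear Lyapunov function. -/
private lemma exists_mu_of_specRad_lt_one (M : Matrix (Fin n) (Fin n) ℝ)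
    (hM : ∀ i j, 0 ≤ M i j) (hn : 0 < n) (hρ : specRad M < 1) :
    ∃ μ : Fin n → ℝ, (∀ i, 0 < μ i) ∧ ∀ j, Matrix.vecMul μ (M - 1) j < 0 := by
  classical
  letI : SeminormedRing (Matrix (Fin n) (Fin n) ℂ) := Matrix.linftyOpSemiNormedRing
  letI : NormedRing (Matrix (Fin n) (Fin n) ℂ) := Matrix.linftyOpNormedRing
  letI : NormedAlgebra ℂ (Matrix (Fin n) (Fin n) ℂ) := Matrix.linftyOpNormedAlgebra
  set A : Matrix (Fin n) (Fin n) ℂ := M.map (fun x => (x : ℂ)) with hA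
  -- the spectral radius is finite
  have hfin : spectralRadius ℂ A ≠ ⊤ := by
    refine ne_top_of_le_ne_top (ENNReal.mul_ne_top ?_ ?_)
      (spectrum.spectralRadius_le_pow_nnnorm_pow_one_div ℂ A 0) <;>
      exact ENNReal.rpow_ne_top_of_nonneg (by norm_num) ENNReal.coe_ne_top
  have hρ1 : spectralRadius ℂ A < 1 := by
    rw [← ENNReal.toReal_lt_toReal hfin ENNReal.one_ne_top]
    simpa [specRad] using hρ
  -- choose r strictly between
  obtain ⟨r, hr1, hr2⟩ := ENNReal.lt_iff_exists_nnreal_btwn.mp hρ1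
  -- Gelfand's formula
  have hG := spectrum.pow_nnnorm_pow_one_div_tendsto_nhds_spectralRadius A
  have hev : ∀ᶠ k in Filter.atTop, ((‖A ^ k‖₊ : ℝ≥0∞)) ^ (1 / (k : ℕ) : ℝ) < (r : ℝ≥0∞) :=
    hG.eventually_lt_const hr1
  obtain ⟨k, hk, hk1⟩ := (hev.and (Filter.eventually_ge_atTop 1)).exists
  have hkR : (0 : ℝ) < (k : ℝ) := by exact_mod_cast hk1
  -- the norm of `A ^ k` is `< 1`
  have hck : (‖A ^ k‖₊ : ℝ≥0∞) < 1 := by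
    by_contra hcon
    push_neg at hcon
    have h1 : (1 : ℝ≥0∞) ≤ (‖A ^ k‖₊ : ℝ≥0∞) ^ (1 / (k : ℕ) : ℝ) :=
      ENNReal.one_le_rpow hcon (by positivity)
    exact (h1.trans_lt (hk.trans hr2)).false
  have hc : ‖A ^ k‖ < 1 := by exact_mod_cast ENNReal.coe_lt_one_iff.mp hck
  -- find a power with column sums strictly less than `1`
  obtain ⟨m, hm⟩ := exists_pow_lt_of_lt_one
    (show (0 : ℝ) < 1 / (n + 1) by positivity) hc
  set N : ℕ := k * (m + 1) with hN
  have hN1 : 1 ≤ N := le_trans (by norm_num) (Nat.mul_le_mul hk1 (Nat.succ_le_succ (Nat.zero_le m)))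
  have hNnorm : ‖A ^ N‖ < 1 / (n + 1) := by
    have h1 : ‖A ^ N‖ ≤ ‖A ^ k‖ ^ (m + 1) := by
      rw [hN, pow_mul]
      exact norm_pow_le' (A ^ k) m.succ_pos
    have h2 : ‖A ^ k‖ ^ (m + 1) ≤ ‖A ^ k‖ ^ m := by
      rw [pow_succ]
      exact mul_le_of_le_one_right (pow_nonneg (norm_nonneg _) m) hc.le
    exact lt_of_le_of_lt (h1.trans h2) hm
  -- entrywise bound on `M ^ N`
  have hentry : ∀ i j, (M ^ N) i j < 1 / (n + 1) := by
    intro i j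
    have h1 : ‖(A ^ N) i j‖₊ ≤ ‖A ^ N‖₊ := by
      rw [Matrix.linfty_opNNNorm_def]
      exact le_trans
        (Finset.single_le_sum (f := fun j' => ‖(A ^ N) i j'‖₊) (fun _ _ => zero_le)
          (Finset.mem_univ j))
        (Finset.le_sup (f := fun i => ∑ j, ‖(A ^ N) i j‖₊) (Finset.mem_univ i))
    have h2 : ‖(A ^ N) i j‖ ≤ ‖A ^ N‖ := h1
    have h3 : (A ^ N) i j = ((M ^ N) i j : ℂ) := by
      rw [hA, map_pow_aux]; rfl
    have h4 : ‖(A ^ N) i j‖ = (M ^ N) i j := by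
      rw [h3, Complex.norm_real, Real.norm_eq_abs, abs_of_nonneg (pow_nonneg_aux M hM N i j)]
    rw [← h4]
    exact lt_of_le_of_lt h2 hNnorm
  -- the column sums of the powers of `M`
  set f : ℕ → Fin n → ℝ := fun k j => ∑ l, (M ^ k) l j with hf
  have hf0 : ∀ j, f 0 j = 1 := by
    intro j
    simp [hf, Matrix.one_apply]
  have hfnonneg : ∀ k j, 0 ≤ f k j :=
    fun k j => Finset.sum_nonneg fun l _ => pow_nonneg_aux M hM k l j
  have hfN : ∀ j, f N j < 1 := by
    intro j
    have h1 : f N j < ∑ _l : Fin n, (1 / ((n : ℝ) + 1)) :=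
      Finset.sum_lt_sum_of_nonempty (Finset.univ_nonempty_iff.mpr (Fin.pos_iff_nonempty.mp hn))
        fun l _ => by exact_mod_cast hentry l j
    have h2 : ∑ _l : Fin n, (1 / ((n : ℝ) + 1)) = n * (1 / (n + 1)) := by
      simp [Finset.sum_const, mul_comm]
    rw [h2] at h1
    refine lt_of_lt_of_le h1 ?_
    rw [mul_one_div, div_le_one (by positivity)]
    linarith
  -- the Lyapunov vector
  refine ⟨fun j => ∑ k ∈ Finset.range N, f k j, ?_, ?_⟩
  · intro j
    refine Finset.sum_pos' (fun k _ => hfnonneg k j) ⟨0, Finset.mem_range.mpr hN1, ?_⟩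
    rw [hf0 j]; norm_num
  · intro j
    have hstep : ∀ k, ∑ i, f k i * M i j = f (k + 1) j := by
      intro k
      calc ∑ i, f k i * M i j = ∑ i, ∑ l, (M ^ k) l i * M i j := by
            simp [hf, Finset.sum_mul]
        _ = ∑ l, ∑ i, (M ^ k) l i * M i j := Finset.sum_comm
        _ = f (k + 1) j := by simp [hf, pow_succ, Matrix.mul_apply]
    have hvm : Matrix.vecMul (fun j => ∑ k ∈ Finset.range N, f k j) M j
        = ∑ k ∈ Finset.range N, f (k + 1) j := by
      calc Matrix.vecMul (fun j => ∑ k ∈ Finset.range N, f k j) M j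
          = ∑ i, (∑ k ∈ Finset.range N, f k i) * M i j := by
            simp [Matrix.vecMul, dotProduct]
        _ = ∑ i, ∑ k ∈ Finset.range N, f k i * M i j := by
            simp [Finset.sum_mul]
        _ = ∑ k ∈ Finset.range N, ∑ i, f k i * M i j := Finset.sum_comm
        _ = ∑ k ∈ Finset.range N, f (k + 1) j := Finset.sum_congr rfl fun k _ => hstep k
    rw [Matrix.vecMul_sub, Matrix.vecMul_one, Pi.sub_apply, hvm]
    have htel : ∑ k ∈ Finset.range N, f (k + 1) j - ∑ k ∈ Finset.range N, f k j
        = f N j - f 0 j := by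
      rw [← Finset.sum_sub_distrib]
      exact Finset.sum_range_sub (fun k => f k j) N
    rw [htel, hf0 j]
    linarith [hfN j]

/-- The "if" direction. -/
private lemma specRad_lt_one_of_mu (M : Matrix (Fin n) (Fin n) ℝ) (hM : ∀ i j, 0 ≤ M i j)
    (μ : Fin n → ℝ) (hμ : ∀ i, 0 < μ i) (h : ∀ j, Matrix.vecMul μ (M - 1) j < 0) :
    specRad M < 1 := by
  classical
  have hlt : ∀ j, Matrix.vecMul μ M j < μ j := by
    intro j
    have := h j
    rw [Matrix.vecMul_sub, Matrix.vecMul_one, Pi.sub_apply] at this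
    linarith
  rcases Nat.eq_zero_or_pos n with h0 | hn
  · subst h0
    haveI : Subsingleton (Matrix (Fin 0) (Fin 0) ℂ) := ⟨fun a b => by ext i; exact i.elim0⟩
    have hsp : spectrum ℂ (M.map (fun x => (x : ℂ))) = ∅ := by
      ext z
      simp [spectrum.mem_iff, isUnit_of_subsingleton]
    rw [specRad, spectralRadius, hsp]
    simp
  · have hne : (Finset.univ : Finset (Fin n)).Nonempty := ⟨⟨0, hn⟩, Finset.mem_univ _⟩
    set θ : ℝ := max 0 (Finset.univ.sup' hne fun j => Matrix.vecMul μ M j / μ j) with hθ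
    have hθ0 : 0 ≤ θ := le_max_left _ _
    have hθ1 : θ < 1 := by
      refine max_lt one_pos ?_
      refine (Finset.sup'_lt_iff hne).mpr fun j _ => ?_
      exact (div_lt_one (hμ j)).mpr (hlt j)
    have hθle : ∀ j, Matrix.vecMul μ M j ≤ θ * μ j := by
      intro j
      have h1 : Matrix.vecMul μ M j / μ j ≤ θ :=
        le_trans (Finset.le_sup' (f := fun j => Matrix.vecMul μ M j / μ j) (Finset.mem_univ j)) (le_max_right _ _)
      have h2 := mul_le_mul_of_nonneg_right h1 (hμ j).le
      rwa [div_mul_cancel₀ _ (hμ j).ne'] at h2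
    have hspec : ∀ z ∈ spectrum ℂ (M.map (fun x => (x : ℂ))), ‖z‖ ≤ θ := by
      intro z hz
      set A : Matrix (Fin n) (Fin n) ℂ := M.map (fun x => (x : ℂ)) with hA
      rw [spectrum.mem_iff] at hz
      have hdet : (algebraMap ℂ (Matrix (Fin n) (Fin n) ℂ) z - A).det = 0 := by
        by_contra hd
        exact hz ((Matrix.isUnit_iff_isUnit_det _).mpr (isUnit_iff_ne_zero.mpr hd))
      obtain ⟨v, hv0, hv⟩ := (Matrix.exists_mulVec_eq_zero_iff).mpr hdet
      have hAv : A.mulVec v = z • v := by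
        have h1 : (algebraMap ℂ (Matrix (Fin n) (Fin n) ℂ) z - A).mulVec v
            = z • v - A.mulVec v := by
          rw [Matrix.sub_mulVec, Algebra.algebraMap_eq_smul_one, Matrix.smul_mulVec,
            Matrix.one_mulVec]
        rw [h1] at hv
        exact (sub_eq_zero.mp hv).symm
      set x : Fin n → ℝ := fun i => ‖v i‖ with hx
      have hx0 : ∀ i, 0 ≤ x i := fun i => norm_nonneg _
      have hkey : ∀ i, ‖z‖ * x i ≤ ∑ j, M i j * x j := by
        intro i
        have h1 : ‖z‖ * x i = ‖(A.mulVec v) i‖ := by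
          rw [hAv]
          simp [hx, norm_smul]
        rw [h1]
        have h2 : (A.mulVec v) i = ∑ j, A i j * v j := by
          simp [Matrix.mulVec, dotProduct]
        rw [h2]
        refine le_trans (norm_sum_le _ _) (Finset.sum_le_sum fun j _ => ?_)
        rw [norm_mul]
        have h3 : ‖A i j‖ = M i j := by
          rw [hA]
          simp only [Matrix.map_apply, Complex.norm_real, Real.norm_eq_abs]
          exact abs_of_nonneg (hM i j)
        rw [h3]
      obtain ⟨i₀, hi₀⟩ := Function.ne_iff.mp hv0
      have hS : 0 < ∑ j, μ j * x j :=
        Finset.sum_pos' (fun j _ => mul_nonneg (hμ j).le (hx0 j))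
          ⟨i₀, Finset.mem_univ _, mul_pos (hμ i₀) (norm_pos_iff.mpr hi₀)⟩
      have hmain : ‖z‖ * ∑ j, μ j * x j ≤ θ * ∑ j, μ j * x j := by
        calc ‖z‖ * ∑ j, μ j * x j = ∑ i, μ i * (‖z‖ * x i) := by
              rw [Finset.mul_sum]
              exact Finset.sum_congr rfl fun i _ => by ring
          _ ≤ ∑ i, μ i * ∑ j, M i j * x j :=
              Finset.sum_le_sum fun i _ => mul_le_mul_of_nonneg_left (hkey i) (hμ i).le
          _ = ∑ j, (∑ i, μ i * M i j) * x j := by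
              simp only [Finset.mul_sum, Finset.sum_mul]
              rw [Finset.sum_comm]
              exact Finset.sum_congr rfl fun j _ => Finset.sum_congr rfl fun i _ => by ring
          _ = ∑ j, Matrix.vecMul μ M j * x j := by
              refine Finset.sum_congr rfl fun j _ => ?_
              simp [Matrix.vecMul, dotProduct]
          _ ≤ ∑ j, (θ * μ j) * x j :=
              Finset.sum_le_sum fun j _ => mul_le_mul_of_nonneg_right (hθle j) (hx0 j)
          _ = θ * ∑ j, μ j * x j := by
              rw [Finset.mul_sum]
              exact Finset.sum_congr rfl fun j _ => by ring
      exact le_of_mul_le_mul_right hmain hS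
    have hrad : spectralRadius ℂ (M.map (fun x => (x : ℂ))) ≤ ENNReal.ofReal θ := by
      rw [spectralRadius]
      refine iSup₂_le fun z hz => ?_
      rw [← ENNReal.ofReal_coe_nnreal, coe_nnnorm]
      exact ENNReal.ofReal_le_ofReal (hspec z hz)
    have h2 : specRad M ≤ θ := by
      refine le_trans (ENNReal.toReal_mono ENNReal.ofReal_ne_top hrad) ?_
      rw [ENNReal.toReal_ofReal hθ0]
    exact lt_of_le_of_lt h2 hθ1

end Aux

theorem stmt2 {n : ℕ} (M : Matrix (Fin n) (Fin n) ℝ) (hM : ∀ i j, 0 ≤ M i j) :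
    specRad M < 1 ↔
      ∃ μ : Fin n → ℝ, (∀ i, 0 < μ i) ∧ ∀ j, Matrix.vecMul μ (M - 1) j < 0 := by
  constructor
  · intro h
    rcases Nat.eq_zero_or_pos n with h0 | hn
    · subst h0
      exact ⟨fun i => i.elim0, fun i => i.elim0, fun j => j.elim0⟩
    · exact exists_mu_of_specRad_lt_one M hM hn h
  · rintro ⟨μ, hμ, h⟩
    exact specRad_lt_one_of_mu M hM μ hμ h
end

section
/- Let A₀ be a Metzler matrix and A₁,…,A_N nonnegative matrices. If there exist positive definite diagonal matrices P, Q₁,…,Q_N such that A₀ᵀP + PA₀ + Σᵢ (Qᵢ + PAᵢQᵢ^{-1}AᵢᵀP) ≺ 0, then the matrix A₀ + Σᵢ Aᵢ is Hurwitz stable. -/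
set_option maxHeartbeats 1000000

open Matrix

def NegDef {n : ℕ} (M : Matrix (Fin n) (Fin n) ℝ) : Prop := (-M).PosDef

section auxiliary
open Complex
open scoped ComplexOrder

lemma posDef_map_complex {n : ℕ} {T : Matrix (Fin n) (Fin n) ℝ} (hT : T.PosDef) :
    (T.map (fun x => (x : ℂ))).PosDef := by
  have hsym : Tᵀ = T := hT.isHermitian
  refine PosDef.of_dotProduct_mulVec_pos (hT.isHermitian.map _ (fun a => by simp [Complex.conj_ofReal])) ?_
  intro x hx
  set a : Fin n → ℝ := fun i => (x i).re with ha
  set b : Fin n → ℝ := fun i => (x i).im with hb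
  have hab : a ⬝ᵥ (T *ᵥ b) = b ⬝ᵥ (T *ᵥ a) := by
    rw [dotProduct_mulVec, show T *ᵥ a = a ᵥ* T from by
      rw [← vecMul_transpose, hsym], dotProduct_comm]
  have hre : (star x ⬝ᵥ ((T.map (fun x => (x : ℂ))) *ᵥ x)).re
      = a ⬝ᵥ (T *ᵥ a) + b ⬝ᵥ (T *ᵥ b) := by
    simp only [dotProduct, mulVec, map_apply, Pi.star_apply, Finset.mul_sum,
      Complex.re_sum, Complex.mul_re, Complex.mul_im, Complex.ofReal_re, Complex.ofReal_im,
      RCLike.star_def, Complex.conj_re, Complex.conj_im]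
    rw [← Finset.sum_add_distrib]
    refine Finset.sum_congr rfl fun j _ => ?_
    rw [← Finset.sum_add_distrib]
    refine Finset.sum_congr rfl fun k _ => ?_
    simp only [ha, hb]
    ring
  have him : (star x ⬝ᵥ ((T.map (fun x => (x : ℂ))) *ᵥ x)).im = 0 := by
    simp only [dotProduct, mulVec, map_apply, Pi.star_apply, Finset.mul_sum,
      Complex.im_sum, Complex.mul_re, Complex.mul_im, Complex.ofReal_re, Complex.ofReal_im,
      RCLike.star_def, Complex.conj_re, Complex.conj_im]
    refine Eq.trans ?_ (show a ⬝ᵥ (T *ᵥ b) - b ⬝ᵥ (T *ᵥ a) = 0 from by rw [hab, sub_self])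
    simp only [dotProduct, mulVec, Finset.mul_sum, ← Finset.sum_sub_distrib]
    refine Finset.sum_congr rfl fun j _ => Finset.sum_congr rfl fun k _ => ?_
    simp only [ha, hb]
    ring
  have hane : a ≠ 0 ∨ b ≠ 0 := by
    by_contra h
    push_neg at h
    apply hx
    funext i
    have h1 : a i = 0 := by rw [h.1]; rfl
    have h2 : b i = 0 := by rw [h.2]; rfl
    exact Complex.ext h1 h2
  have hpos : 0 < a ⬝ᵥ (T *ᵥ a) + b ⬝ᵥ (T *ᵥ b) := by
    rcases hane with h | h
    · exact add_pos_of_pos_of_nonneg (by simpa using hT.dotProduct_mulVec_pos h) (by simpa using hT.posSemidef.dotProduct_mulVec_nonneg b)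
    · exact add_pos_of_nonneg_of_pos (by simpa using hT.posSemidef.dotProduct_mulVec_nonneg a) (by simpa using hT.dotProduct_mulVec_pos h)
  rw [Complex.lt_def]
  constructor
  · simpa [hre] using hpos
  · simpa using him.symm


theorem lyap {n : ℕ} (M : Matrix (Fin n) (Fin n) ℝ) (p : Fin n → ℝ) (hp : ∀ i, 0 < p i)
    (hS : (-(Mᵀ * Matrix.diagonal p + Matrix.diagonal p * M)).PosDef)
    (μ : ℂ) (hμ : μ ∈ spectrum ℂ (M.map (fun x => (x : ℂ)))) : μ.re < 0 := by
  classical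
  set M' : Matrix (Fin n) (Fin n) ℂ := M.map (fun x => (x : ℂ)) with hM'
  set P : Matrix (Fin n) (Fin n) ℝ := Matrix.diagonal p with hP
  set P' : Matrix (Fin n) (Fin n) ℂ := P.map (fun x => (x : ℂ)) with hP'
  rw [spectrum.mem_iff] at hμ
  have hdet : (algebraMap ℂ (Matrix (Fin n) (Fin n) ℂ) μ - M').det = 0 := by
    by_contra h
    exact hμ ((Matrix.isUnit_iff_isUnit_det _).mpr (isUnit_iff_ne_zero.mpr h))
  obtain ⟨v, hv0, hv⟩ := (Matrix.exists_mulVec_eq_zero_iff).mpr hdet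
  have heig : M' *ᵥ v = μ • v := by
    rw [sub_mulVec] at hv
    have h1 : (algebraMap ℂ (Matrix (Fin n) (Fin n) ℂ) μ) *ᵥ v = μ • v := by
      funext j
      simp [Matrix.algebraMap_eq_diagonal, mulVec_diagonal]
    rw [h1, sub_eq_zero] at hv
    exact hv.symm
  have hstar : M' *ᵥ (star v) = star (M' *ᵥ v) := by
    funext j
    simp only [mulVec, dotProduct, hM', map_apply, Pi.star_apply, star_sum, star_mul',
      Complex.star_def, Complex.conj_ofReal]
  have hmap : (Mᵀ * P + P * M).map (fun x => (x : ℂ)) = M'ᵀ * P' + P' * M' := by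
    have hcoe : (fun x : ℝ => (x : ℂ)) = ⇑Complex.ofRealHom := rfl
    rw [hM', hP', hcoe]
    rw [Matrix.map_add _ (fun a b => map_add Complex.ofRealHom a b), Matrix.map_mul,
      Matrix.map_mul, Matrix.transpose_map]
  set d : ℂ := star v ⬝ᵥ (P' *ᵥ v) with hd
  have hPpos : P'.PosDef := by
    rw [hP', hP]
    exact posDef_map_complex (Matrix.PosDef.diagonal hp)
  have hdlt := hPpos.dotProduct_mulVec_pos hv0
  rw [Complex.lt_def] at hdlt
  have hdre : 0 < d.re := hdlt.1
  set c : ℂ := star v ⬝ᵥ ((Mᵀ * P + P * M).map (fun x => (x : ℂ)) *ᵥ v) with hc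
  have hceq : c = ((2 * μ.re : ℝ) : ℂ) * d := by
    rw [hc, hmap, add_mulVec, dotProduct_add]
    have t2 : (P' * M') *ᵥ v = μ • (P' *ᵥ v) := by
      rw [← mulVec_mulVec, heig, mulVec_smul]
    have t1 : star v ⬝ᵥ ((M'ᵀ * P') *ᵥ v) = (starRingEnd ℂ) μ * d := by
      rw [← mulVec_mulVec, dotProduct_mulVec, vecMul_transpose, hstar, heig, star_smul,
        smul_dotProduct, hd]
      rfl
    rw [t1, t2, dotProduct_smul, smul_eq_mul, hd, ← add_mul, ← Complex.add_conj, add_comm]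
  have hneg := (posDef_map_complex hS).dotProduct_mulVec_pos hv0
  have hmn : (-(Mᵀ * P + P * M)).map (fun x : ℝ => (x : ℂ))
      = -((Mᵀ * P + P * M).map (fun x : ℝ => (x : ℂ))) := by
    ext i j; simp
  rw [hmn, neg_mulVec, dotProduct_neg, ← hc, Complex.lt_def] at hneg
  have hcre : c.re < 0 := by
    have := hneg.1
    simp only [Complex.zero_re, Complex.neg_re] at this
    linarith
  rw [hceq] at hcre
  simp only [Complex.mul_re, Complex.ofReal_re, Complex.ofReal_im, zero_mul, sub_zero] at hcre
  nlinarith [hdre]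

lemma riccati_step {n N : ℕ} (A₀ : Matrix (Fin n) (Fin n) ℝ) (A : Fin N → Matrix (Fin n) (Fin n) ℝ)
    (p : Fin n → ℝ) (q : Fin N → Fin n → ℝ)
    (hp : ∀ i, 0 < p i) (hq : ∀ i k, 0 < q i k)
    (hric : (-((A₀)ᵀ * Matrix.diagonal p + Matrix.diagonal p * A₀ +
      ∑ i, (Matrix.diagonal (q i) +
        Matrix.diagonal p * A i * (Matrix.diagonal (q i))⁻¹ * (A i)ᵀ * Matrix.diagonal p))).PosDef) :
    (-(((A₀ + ∑ i, A i)ᵀ) * Matrix.diagonal p + Matrix.diagonal p * (A₀ + ∑ i, A i))).PosDef := by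
  classical
  set P : Matrix (Fin n) (Fin n) ℝ := Matrix.diagonal p with hP
  set D : Fin N → Matrix (Fin n) (Fin n) ℝ :=
    fun i => Matrix.diagonal (fun k => Real.sqrt (q i k)) with hD
  set E : Fin N → Matrix (Fin n) (Fin n) ℝ :=
    fun i => Matrix.diagonal (fun k => (Real.sqrt (q i k))⁻¹) with hE
  set B : Fin N → Matrix (Fin n) (Fin n) ℝ := fun i => D i - E i * (A i)ᵀ * P with hB
  have hsne : ∀ i k, Real.sqrt (q i k) ≠ 0 := fun i k => (Real.sqrt_pos.mpr (hq i k)).ne'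
  have hqinv : ∀ i : Fin N, (Matrix.diagonal (q i))⁻¹ = Matrix.diagonal (fun k => (q i k)⁻¹) := by
    intro i
    apply Matrix.inv_eq_right_inv
    rw [Matrix.diagonal_mul_diagonal]
    convert Matrix.diagonal_one with k
    exact mul_inv_cancel₀ (hq i k).ne'
  have hDD : ∀ i, D i * D i = Matrix.diagonal (q i) := by
    intro i
    rw [hD, Matrix.diagonal_mul_diagonal,
      show (fun k => Real.sqrt (q i k) * Real.sqrt (q i k)) = q i from
        funext fun k => Real.mul_self_sqrt (hq i k).le]
  have hDE : ∀ i, D i * E i = 1 := by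
    intro i
    rw [hD, hE, Matrix.diagonal_mul_diagonal]
    convert Matrix.diagonal_one with k
    exact mul_inv_cancel₀ (hsne i k)
  have hED : ∀ i, E i * D i = 1 := by
    intro i
    rw [hD, hE, Matrix.diagonal_mul_diagonal]
    convert Matrix.diagonal_one with k
    exact inv_mul_cancel₀ (hsne i k)
  have hEE : ∀ i, E i * E i = (Matrix.diagonal (q i))⁻¹ := by
    intro i
    rw [hE, Matrix.diagonal_mul_diagonal, hqinv i,
      show (fun k => (Real.sqrt (q i k))⁻¹ * (Real.sqrt (q i k))⁻¹) = fun k => (q i k)⁻¹ from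
        funext fun k => by rw [← mul_inv, Real.mul_self_sqrt (hq i k).le]]
  have hBt : ∀ i, (B i)ᵀ = D i - P * A i * E i := by
    intro i
    rw [hB]
    simp only [transpose_sub, transpose_mul, transpose_transpose, hD, hE, hP,
      Matrix.diagonal_transpose]
    rw [Matrix.mul_assoc]
  have hBB : ∀ i, (B i)ᵀ * B i
      = Matrix.diagonal (q i) + P * A i * (Matrix.diagonal (q i))⁻¹ * (A i)ᵀ * P
        - ((A i)ᵀ * P + P * A i) := by
    intro i
    rw [hBt i]
    have expand : (D i - P * A i * E i) * (D i - E i * (A i)ᵀ * P)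
        = D i * D i - (D i * E i) * ((A i)ᵀ * P) - (P * A i) * (E i * D i)
          + (P * A i) * (E i * E i) * ((A i)ᵀ * P) := by
      noncomm_ring
    rw [show B i = D i - E i * (A i)ᵀ * P from rfl, expand, hDD, hDE, hED, hEE]
    noncomm_ring
  have hsum : (A₀)ᵀ * P + P * A₀ +
        ∑ i, (Matrix.diagonal (q i) + P * A i * (Matrix.diagonal (q i))⁻¹ * (A i)ᵀ * P)
      = ((A₀ + ∑ i, A i)ᵀ * P + P * (A₀ + ∑ i, A i)) + ∑ i, (B i)ᵀ * B i := by
    rw [Finset.sum_congr rfl (fun i _ => hBB i)]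
    simp only [transpose_add, transpose_sum, Matrix.add_mul, Matrix.mul_add,
      Matrix.sum_mul, Matrix.mul_sum, Finset.sum_sub_distrib, Finset.sum_add_distrib]
    abel
  have hposs : (∑ i, (B i)ᵀ * B i).PosSemidef := by
    apply Finset.sum_induction _ _ (fun _ _ ha hb => ha.add hb) Matrix.PosSemidef.zero
    intro i _
    simpa [Matrix.conjTranspose_eq_transpose_of_trivial] using
      Matrix.posSemidef_conjTranspose_mul_self (B i)
  have key : -((A₀ + ∑ i, A i)ᵀ * P + P * (A₀ + ∑ i, A i))
      = -((A₀)ᵀ * P + P * A₀ +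
          ∑ i, (Matrix.diagonal (q i) + P * A i * (Matrix.diagonal (q i))⁻¹ * (A i)ᵀ * P))
        + ∑ i, (B i)ᵀ * B i := by
    rw [hsum]; abel
  rw [key]
  exact hric.add_posSemidef hposs


end auxiliary

theorem stmt4 {n N : ℕ} (A₀ : Matrix (Fin n) (Fin n) ℝ) (A : Fin N → Matrix (Fin n) (Fin n) ℝ)
    (hA₀ : IsMetzler A₀) (hA : ∀ i, ∀ k l, 0 ≤ A i k l)
    (p : Fin n → ℝ) (q : Fin N → Fin n → ℝ)
    (hp : ∀ i, 0 < p i) (hq : ∀ i k, 0 < q i k)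
    (hric : NegDef ((A₀)ᵀ * Matrix.diagonal p + Matrix.diagonal p * A₀ +
      ∑ i, (Matrix.diagonal (q i) +
        Matrix.diagonal p * A i * (Matrix.diagonal (q i))⁻¹ * (A i)ᵀ * Matrix.diagonal p))) :
    IsHurwitz (A₀ + ∑ i, A i) := by
  intro μ hμ
  exact lyap (A₀ + ∑ i, A i) p hp (riccati_step A₀ A p q hp hq hric) μ hμ
end

section
/- For nonnegative matrices A₁,…,A_N, the maximum over all ω ∈ [0,2π]^N of the spectral radius ρ(Σₖ Aₖ e^{-iωₖ}) equals ρ(Σₖ Aₖ), i.e., the maximum is attained at ω = 0. -/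
open Matrix
open scoped ENNReal Real
open Filter
open scoped Topology
section Aux
attribute [local instance] Matrix.linftyOpNormedRing Matrix.linftyOpNormedAlgebra

lemma mulVec_mono {n : ℕ} {M : Matrix (Fin n) (Fin n) ℝ} (hM : ∀ i j, 0 ≤ M i j)
    {x y : Fin n → ℝ} (hxy : ∀ j, x j ≤ y j) (i : Fin n) : (M *ᵥ x) i ≤ (M *ᵥ y) i := by
  simp only [Matrix.mulVec, dotProduct]
  exact Finset.sum_le_sum fun j _ => mul_le_mul_of_nonneg_left (hxy j) (hM i j)

lemma pow_entry_nonneg {n : ℕ} {M : Matrix (Fin n) (Fin n) ℝ} (hM : ∀ i j, 0 ≤ M i j)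
    (m : ℕ) : ∀ i j, 0 ≤ (M ^ m) i j := by
  induction m with
  | zero => intro i j; simp [Matrix.one_apply]; positivity
  | succ m ih =>
    intro i j
    rw [pow_succ, Matrix.mul_apply]
    exact Finset.sum_nonneg fun k _ => mul_nonneg (ih i k) (hM k j)

lemma specRad_le_of_abs_le {n : ℕ} (B : Matrix (Fin n) (Fin n) ℂ)
    (C : Matrix (Fin n) (Fin n) ℝ) (hBC : ∀ i j, ‖B i j‖ ≤ C i j) :
    spectralRadius ℂ B ≤ spectralRadius ℂ (C.map (fun t => (t : ℂ))) := by
  have hC : ∀ i j, 0 ≤ C i j := fun i j => (norm_nonneg _).trans (hBC i j)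
  set C' := C.map (fun t => (t : ℂ)) with hC'
  refine iSup₂_le fun μ hμ => ?_
  -- eigenvector
  rw [spectrum.mem_iff] at hμ
  have hdet : (algebraMap ℂ _ μ - B).det = 0 := by
    by_contra hd
    exact hμ ((Matrix.isUnit_iff_isUnit_det _).mpr (isUnit_iff_ne_zero.mpr hd))
  obtain ⟨v, hv, hv2⟩ := Matrix.exists_mulVec_eq_zero_iff.mpr hdet
  rw [Matrix.sub_mulVec, sub_eq_zero, Algebra.algebraMap_eq_smul_one,
    Matrix.smul_mulVec, Matrix.one_mulVec] at hv2
  -- hv2 : μ • v = B *ᵥ v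
  set w : Fin n → ℝ := fun i => ‖v i‖ with hw
  have hwnn : ∀ i, 0 ≤ w i := fun i => norm_nonneg _
  have step : ∀ i, ‖μ‖ * w i ≤ (C *ᵥ w) i := by
    intro i
    have : ‖μ‖ * w i = ‖(B *ᵥ v) i‖ := by
      rw [← hv2]; simp [hw, norm_smul]
    rw [this]
    calc ‖(B *ᵥ v) i‖ = ‖∑ j, B i j * v j‖ := by simp [Matrix.mulVec, dotProduct]
      _ ≤ ∑ j, ‖B i j * v j‖ := norm_sum_le _ _
      _ = ∑ j, ‖B i j‖ * ‖v j‖ := by simp [norm_mul]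
      _ ≤ ∑ j, C i j * w j :=
          Finset.sum_le_sum fun j _ => mul_le_mul_of_nonneg_right (hBC i j) (norm_nonneg _)
      _ = (C *ᵥ w) i := by simp [Matrix.mulVec, dotProduct]
  have iter : ∀ m : ℕ, ∀ i, ‖μ‖ ^ m * w i ≤ ((C ^ m) *ᵥ w) i := by
    intro m
    induction m with
    | zero => intro i; simp [Matrix.one_mulVec]
    | succ m ih =>
      intro i
      have h1 : ‖μ‖ ^ (m+1) * w i = ‖μ‖ * (‖μ‖ ^ m * w i) := by ring
      have h2 : ‖μ‖ * (‖μ‖ ^ m * w i) ≤ ‖μ‖ * ((C ^ m) *ᵥ w) i :=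
        mul_le_mul_of_nonneg_left (ih i) (norm_nonneg _)
      have h3 : ‖μ‖ * ((C ^ m) *ᵥ w) i = ((C ^ m) *ᵥ (‖μ‖ • w)) i := by
        rw [Matrix.mulVec_smul]; simp
      have h4 : ((C ^ m) *ᵥ (‖μ‖ • w)) i ≤ ((C ^ m) *ᵥ (C *ᵥ w)) i :=
        mulVec_mono (pow_entry_nonneg hC m) (fun j => by simpa using step j) i
      have h5 : ((C ^ m) *ᵥ (C *ᵥ w)) i = ((C ^ (m+1)) *ᵥ w) i := by
        rw [Matrix.mulVec_mulVec, ← pow_succ]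
      linarith
  -- argmax
  have hne : (Finset.univ : Finset (Fin n)).Nonempty := by
    rcases Function.ne_iff.mp hv with ⟨j, _⟩
    exact ⟨j, Finset.mem_univ j⟩
  obtain ⟨i₀, -, hi₀⟩ := Finset.exists_max_image Finset.univ w hne
  have hwi₀ : 0 < w i₀ := by
    rcases Function.ne_iff.mp hv with ⟨j, hj⟩
    exact lt_of_lt_of_le (norm_pos_iff.mpr hj) (hi₀ j (Finset.mem_univ j))
  have hwle : ‖w‖ ≤ w i₀ := by
    rw [pi_norm_le_iff_of_nonneg (hwnn i₀)]
    intro i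
    rw [Real.norm_of_nonneg (hwnn i)]
    exact hi₀ i (Finset.mem_univ i)
  have keym : ∀ m : ℕ, ‖μ‖ ^ m ≤ ‖C ^ m‖ := by
    intro m
    have h1 := iter m i₀
    have h2 : ((C ^ m) *ᵥ w) i₀ ≤ ‖(C ^ m) *ᵥ w‖ := by
      rw [← Real.norm_of_nonneg (le_trans (by positivity) h1)]
      exact norm_le_pi_norm _ i₀
    have h3 : ‖(C ^ m) *ᵥ w‖ ≤ ‖C ^ m‖ * ‖w‖ := Matrix.linfty_opNorm_mulVec _ _
    have h4 : ‖C ^ m‖ * ‖w‖ ≤ ‖C ^ m‖ * w i₀ :=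
      mul_le_mul_of_nonneg_left hwle (norm_nonneg _)
    have h6 : ‖μ‖ ^ m * w i₀ ≤ ‖C ^ m‖ * w i₀ := by linarith
    exact le_of_mul_le_mul_right h6 hwi₀
  -- transfer norms to the complex matrix
  have hnn : ∀ m : ℕ, ‖C' ^ m‖₊ = ‖C ^ m‖₊ := by
    intro m
    have hmap : ∀ D : Matrix (Fin n) (Fin n) ℝ,
        D.map (fun t => (t : ℂ)) = Complex.ofRealHom.mapMatrix D := fun _ => rfl
    rw [hC', hmap, ← map_pow, ← hmap]
    simp [Matrix.linfty_opNNNorm_def, Matrix.map_apply]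
  have keym' : ∀ m : ℕ, 1 ≤ m → (‖μ‖₊ : ℝ≥0∞) ≤ (‖C' ^ m‖₊ : ℝ≥0∞) ^ (1 / (m : ℝ)) := by
    intro m hm
    have h1 : (‖μ‖₊ : ℝ≥0∞) ^ (m : ℕ) ≤ (‖C' ^ m‖₊ : ℝ≥0∞) := by
      rw [hnn m, ← ENNReal.coe_pow, ENNReal.coe_le_coe, ← NNReal.coe_le_coe]
      push_cast
      exact (keym m).trans_eq rfl
    have h1' : (‖μ‖₊ : ℝ≥0∞) ^ (m : ℝ) ≤ (‖C' ^ m‖₊ : ℝ≥0∞) := by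
      rwa [ENNReal.rpow_natCast]
    have h2 := ENNReal.rpow_le_rpow h1' (by positivity : (0:ℝ) ≤ 1 / (m : ℝ))
    rwa [← ENNReal.rpow_mul, mul_one_div, div_self
      (by exact_mod_cast Nat.one_le_iff_ne_zero.mp hm : (m:ℝ) ≠ 0),
      ENNReal.rpow_one] at h2
  have hG := spectrum.pow_nnnorm_pow_one_div_tendsto_nhds_spectralRadius C'
  refine ge_of_tendsto hG ?_
  filter_upwards [Filter.eventually_ge_atTop 1] with m hm
  exact keym' m hm


lemma specRad_ne_top {n : ℕ} (M : Matrix (Fin n) (Fin n) ℂ) :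
    spectralRadius ℂ M ≠ ⊤ := by
  rcases Nat.eq_zero_or_pos n with h | h
  · subst h
    have hsub : Subsingleton (Matrix (Fin 0) (Fin 0) ℂ) :=
      Matrix.subsingleton_of_empty_left
    have hsp : spectrum ℂ M = ∅ := by
      rw [Set.eq_empty_iff_forall_notMem]
      intro μ hμ
      rw [spectrum.mem_iff] at hμ
      exact hμ (isUnit_of_subsingleton _)
    rw [spectralRadius, hsp]
    simp
  · haveI : Nonempty (Fin n) := ⟨⟨0, h⟩⟩
    exact ((spectrum.spectralRadius_le_nnnorm (𝕜 := ℂ) M).trans_lt ENNReal.coe_lt_top).ne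

end Aux

noncomputable def specRadC {n : ℕ} (M : Matrix (Fin n) (Fin n) ℂ) : ℝ :=
  (spectralRadius ℂ M).toReal

theorem stmt6 {n N : ℕ} (A : Fin N → Matrix (Fin n) (Fin n) ℝ)
    (hA : ∀ k, ∀ i j, 0 ≤ A k i j) :
    IsGreatest
      {x | ∃ ω : Fin N → ℝ, (∀ k, ω k ∈ Set.Icc (0 : ℝ) (2 * π)) ∧
        x = specRadC (∑ k, Complex.exp (-(ω k : ℂ) * Complex.I) •
              (A k).map (fun t => (t : ℂ)))}
      (specRadC ((∑ k, A k).map (fun t => (t : ℂ)))) := by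
  have hmapsum : (∑ k, A k).map (fun t => (t : ℂ))
      = ∑ k, (A k).map (fun t => (t : ℂ)) := by
    ext i j
    simp [Matrix.sum_apply, Matrix.map_apply]
  constructor
  · refine ⟨0, fun k => ⟨le_rfl, by positivity⟩, ?_⟩
    rw [hmapsum]
    congr 1
    funext k
    simp
  · rintro x ⟨ω, hω, rfl⟩
    refine ENNReal.toReal_mono (specRad_ne_top _) ?_
    exact specRad_le_of_abs_le _ (∑ k, A k) (fun i j => by
      calc ‖(∑ k, Complex.exp (-(ω k : ℂ) * Complex.I) •
              (A k).map (fun t => (t : ℂ))) i j‖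
          = ‖∑ k, Complex.exp (-(ω k : ℂ) * Complex.I) * ((A k i j : ℝ) : ℂ)‖ := by
            simp [Matrix.sum_apply, Matrix.map_apply]
        _ ≤ ∑ k, ‖Complex.exp (-(ω k : ℂ) * Complex.I) * ((A k i j : ℝ) : ℂ)‖ :=
            norm_sum_le _ _
        _ = ∑ k, A k i j := by
            refine Finset.sum_congr rfl fun k _ => ?_
            rw [norm_mul]
            have he : ‖Complex.exp (-(ω k : ℂ) * Complex.I)‖ = 1 := by
              rw [Complex.norm_exp]
              simp
            rw [he, one_mul, Complex.norm_real, Real.norm_of_nonneg (hA k i j)]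
        _ = (∑ k, A k) i j := by simp [Matrix.sum_apply])
end

section
/- Let A₀ be a Metzler matrix, E ∈ ℝ^{n×n_u}_{≥0}, C ∈ ℝ^{n_y×n}_{≥0}, F ∈ ℝ^{n_y×n_u}_{≥0}, and γ > 0. Then A₀ is Hurwitz stable and ‖−CA₀^{-1}E + F‖_∞ < γ (maximum row sum less than γ) if and only if there exists λ ∈ ℝ^n_{>0} such that A₀λ + E𝟙_{n_u} < 0 and Cλ + F𝟙_{n_u} < γ𝟙_{n_y} componentwise. -/
open Matrix

/-- Induced matrix ∞-norm : maximum absolute row sum. -/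
noncomputable def normInf {a b : ℕ} (M : Matrix (Fin a) (Fin b) ℝ) : ℝ :=
  sSup {s | ∃ i : Fin a, s = ∑ j, |M i j|}

open Filter Topology
open scoped NNReal ENNReal

namespace S19

attribute [local instance] Matrix.linftyOpNormedAddCommGroup Matrix.linftyOpNormedRing
  Matrix.linftyOpNormedAlgebra Matrix.linftyOpNormedSpace

variable {n : ℕ}

instance : CompleteSpace (Matrix (Fin n) (Fin n) ℝ) :=
  FiniteDimensional.complete ℝ (Matrix (Fin n) (Fin n) ℝ)

instance : CompleteSpace (Matrix (Fin n) (Fin n) ℂ) :=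
  FiniteDimensional.complete ℂ (Matrix (Fin n) (Fin n) ℂ)

lemma entry_nnnorm_le (M : Matrix (Fin n) (Fin n) ℝ) (i j : Fin n) : ‖M i j‖₊ ≤ ‖M‖₊ := by
  rw [Matrix.linfty_opNNNorm_def]
  refine le_trans (Finset.single_le_sum (f := fun j => ‖M i j‖₊) (fun _ _ => zero_le)
    (Finset.mem_univ j)) ?_
  exact Finset.le_sup (f := fun i => ∑ j : Fin n, ‖M i j‖₊) (Finset.mem_univ i)

noncomputable def entryCLM (i j : Fin n) : Matrix (Fin n) (Fin n) ℝ →L[ℝ] ℝ :=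
  LinearMap.mkContinuous
    { toFun := fun M => M i j, map_add' := fun _ _ => rfl, map_smul' := fun _ _ => rfl } 1
    (fun M => by rw [one_mul]; exact NNReal.coe_le_coe.mpr (entry_nnnorm_le M i j))

lemma nnnorm_map_complex (M : Matrix (Fin n) (Fin n) ℝ) :
    ‖M.map (fun x => (x : ℂ))‖₊ = ‖M‖₊ := by
  rw [Matrix.linfty_opNNNorm_def, Matrix.linfty_opNNNorm_def]
  congr 1; funext i; congr 1; funext j
  simp [Matrix.map_apply]


lemma eventually_pow_nnnorm_le {A : Type*} [NormedRing A] [NormedAlgebra ℂ A] [CompleteSpace A]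
    (a : A) {r : ℝ≥0} (h : spectralRadius ℂ a < (r : ℝ≥0∞)) :
    ∀ᶠ k in atTop, ‖a ^ k‖₊ ≤ r ^ k := by
  have hg := spectrum.pow_nnnorm_pow_one_div_tendsto_nhds_spectralRadius a
  have hev : ∀ᶠ k : ℕ in atTop, (‖a ^ k‖₊ : ℝ≥0∞) ^ (1 / (k : ℝ)) < (r : ℝ≥0∞) :=
    hg.eventually_lt_const h
  filter_upwards [hev, eventually_ge_atTop 1] with k hk hk1
  have hkR : (0 : ℝ) < (k : ℝ) := by exact_mod_cast hk1
  have h2 : ((‖a ^ k‖₊ : ℝ≥0∞) ^ (1 / (k : ℝ))) ^ (k : ℝ) < ((r : ℝ≥0∞)) ^ (k : ℝ) :=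
    ENNReal.rpow_lt_rpow hk hkR
  rw [← ENNReal.rpow_mul, one_div, inv_mul_cancel₀ (ne_of_gt hkR), ENNReal.rpow_one,
    ENNReal.rpow_natCast, ← ENNReal.coe_pow, ENNReal.coe_lt_coe] at h2
  exact h2.le

lemma geom_inv {R : Type*} [NormedRing R] [CompleteSpace R] {y : R}
    (h : Summable fun k : ℕ => y ^ k) :
    (1 - y) * (∑' k : ℕ, y ^ k) = 1 ∧ (∑' k : ℕ, y ^ k) * (1 - y) = 1 := by
  have hy0 : Tendsto (fun k : ℕ => y ^ k) atTop (𝓝 0) := h.tendsto_atTop_zero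
  have hs := h.hasSum.tendsto_sum_nat
  have hlim : Tendsto (fun N : ℕ => 1 - y ^ N) atTop (𝓝 1) := by
    simpa using tendsto_const_nhds.sub hy0
  constructor
  · have h1 : Tendsto (fun N => (1 - y) * ∑ k ∈ Finset.range N, y ^ k) atTop
        (𝓝 ((1 - y) * ∑' k : ℕ, y ^ k)) := hs.const_mul _
    have h2 : (fun N => (1 - y) * ∑ k ∈ Finset.range N, y ^ k) = fun N => 1 - y ^ N := by
      funext N
      have := mul_geom_sum y N
      have h3 : (1 - y) * ∑ k ∈ Finset.range N, y ^ k
          = -((y - 1) * ∑ k ∈ Finset.range N, y ^ k) := by rw [← neg_mul, neg_sub]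
      rw [h3, this, neg_sub]
    rw [h2] at h1
    exact tendsto_nhds_unique h1 hlim
  · have h1 : Tendsto (fun N => (∑ k ∈ Finset.range N, y ^ k) * (1 - y)) atTop
        (𝓝 ((∑' k : ℕ, y ^ k) * (1 - y))) := hs.mul_const _
    have h2 : (fun N => (∑ k ∈ Finset.range N, y ^ k) * (1 - y)) = fun N => 1 - y ^ N := by
      funext N
      have := geom_sum_mul y N
      have h3 : (∑ k ∈ Finset.range N, y ^ k) * (1 - y)
          = -((∑ k ∈ Finset.range N, y ^ k) * (y - 1)) := by rw [← mul_neg, neg_sub]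
      rw [h3, this, neg_sub]
    rw [h2] at h1
    exact tendsto_nhds_unique h1 hlim


lemma mul_entries_nonneg {a b c : ℕ} {P : Matrix (Fin a) (Fin b) ℝ} {Q : Matrix (Fin b) (Fin c) ℝ}
    (hP : ∀ i j, 0 ≤ P i j) (hQ : ∀ i j, 0 ≤ Q i j) : ∀ i j, 0 ≤ (P * Q) i j := by
  intro i j
  rw [Matrix.mul_apply]
  exact Finset.sum_nonneg fun k _ => mul_nonneg (hP i k) (hQ k j)

lemma pow_entries_nonneg {P : Matrix (Fin n) (Fin n) ℝ} (hP : ∀ i j, 0 ≤ P i j) (k : ℕ) :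
    ∀ i j, 0 ≤ (P ^ k) i j := by
  induction k with
  | zero => intro i j; rw [pow_zero]; by_cases h : i = j <;> simp [Matrix.one_apply, h]
  | succ m ih => rw [pow_succ]; exact mul_entries_nonneg ih hP


lemma mapC_pow (M : Matrix (Fin n) (Fin n) ℝ) (k : ℕ) :
    (M.map (fun x => (x : ℂ))) ^ k = (M ^ k).map (fun x => (x : ℂ)) := by
  have hcoe : (fun x : ℝ => (x : ℂ)) = ⇑(algebraMap ℝ ℂ) := by
    funext x; simp
  rw [hcoe]
  induction k with
  | zero => simp [Matrix.map_one]
  | succ m ih => rw [pow_succ, pow_succ, ih, Matrix.map_mul]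

lemma key (A : Matrix (Fin n) (Fin n) ℝ) (hMz : IsMetzler A) (hH : IsHurwitz A) :
    ∃ M : Matrix (Fin n) (Fin n) ℝ, (∀ i j, 0 ≤ M i j) ∧ A * M = -1 ∧ M * A = -1 := by
  classical
  set Ac : Matrix (Fin n) (Fin n) ℂ := A.map (fun x => (x : ℂ)) with hAcdef
  obtain ⟨R0, hR0⟩ := (isBounded_iff_forall_norm_le).mp
    (spectrum.isCompact (𝕜 := ℂ) Ac).isBounded
  obtain ⟨R, hR, hR0'⟩ : ∃ R : ℝ, (∀ μ ∈ spectrum ℂ Ac, ‖μ‖ ≤ R) ∧ (0 : ℝ) ≤ R :=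
    ⟨max R0 0, fun μ hμ => (hR0 μ hμ).trans (le_max_left _ _), le_max_right _ _⟩
  obtain ⟨β, hβpos, hβle, hβ⟩ : ∃ β : ℝ, 0 < β ∧ β ≤ 1 + R ∧
      ∀ μ ∈ spectrum ℂ Ac, μ.re ≤ -β := by
    rcases (spectrum ℂ Ac).eq_empty_or_nonempty with he | hne
    · exact ⟨1, one_pos, by linarith, by simp [he]⟩
    · obtain ⟨μm, hmem, hmax⟩ := (spectrum.isCompact (𝕜 := ℂ) Ac).exists_isMaxOn hne
        (Complex.continuous_re.continuousOn)
      refine ⟨-μm.re, by linarith [hH μm hmem], ?_, fun μ hμ => by simpa using hmax hμ⟩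
      have h1 := hR μm hmem
      have h2 := neg_abs_le μm.re
      have h3 := Complex.abs_re_le_norm μm
      linarith
  obtain ⟨s, hspos, hdiag, hβs, hsβ⟩ : ∃ s : ℝ, 0 < s ∧ (∀ i, 0 ≤ s + A i i) ∧ β ≤ s ∧
      R ^ 2 ≤ s * β := by
    refine ⟨1 + R + R ^ 2 / β + ∑ i, |A i i|, ?_, ?_, ?_, ?_⟩
    · have hRβ : 0 ≤ R ^ 2 / β := div_nonneg (sq_nonneg R) hβpos.le
      have hsum0 : 0 ≤ ∑ i, |A i i| := Finset.sum_nonneg fun _ _ => abs_nonneg _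
      linarith
    · intro i
      have h1 : |A i i| ≤ ∑ k, |A k k| :=
        Finset.single_le_sum (f := fun k => |A k k|) (fun _ _ => abs_nonneg _)
          (Finset.mem_univ i)
      have h2 := neg_abs_le (A i i)
      have hRβ : 0 ≤ R ^ 2 / β := div_nonneg (sq_nonneg R) hβpos.le
      linarith
    · have hsum0 : 0 ≤ ∑ i, |A i i| := Finset.sum_nonneg fun _ _ => abs_nonneg _
      have hRβ : 0 ≤ R ^ 2 / β := div_nonneg (sq_nonneg R) hβpos.le
      linarith
    · have hsum0 : 0 ≤ ∑ i, |A i i| := Finset.sum_nonneg fun _ _ => abs_nonneg _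
      have hRβ : 0 ≤ R ^ 2 / β := div_nonneg (sq_nonneg R) hβpos.le
      have h1 : R ^ 2 / β ≤ 1 + R + R ^ 2 / β + ∑ i, |A i i| := by linarith
      calc R ^ 2 = R ^ 2 / β * β := by field_simp
      _ ≤ (1 + R + R ^ 2 / β + ∑ i, |A i i|) * β := mul_le_mul_of_nonneg_right h1 hβpos.le
  set B : Matrix (Fin n) (Fin n) ℝ := A + s • 1 with hBdef
  have hBapp : ∀ i j, B i j = A i j + s * (if i = j then (1:ℝ) else 0) := by
    intro i j; simp [hBdef, Matrix.one_apply]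
  have hBnn : ∀ i j, 0 ≤ B i j := by
    intro i j
    rw [hBapp]
    by_cases h : i = j
    · subst h; simp; linarith [hdiag i]
    · simp [h]; exact hMz i j h
  set Bc : Matrix (Fin n) (Fin n) ℂ := B.map (fun x => (x : ℂ)) with hBcdef
  have hBc : Bc = Ac + (s : ℂ) • 1 := by
    ext i j
    rw [hBcdef, Matrix.map_apply, hBapp, Matrix.add_apply, hAcdef, Matrix.map_apply,
      Matrix.smul_apply, Matrix.one_apply]
    by_cases h : i = j <;> simp [h]
  have hshift : ∀ ν : ℂ, ν ∈ spectrum ℂ Bc → (ν - s) ∈ spectrum ℂ Ac := by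
    intro ν hν
    rw [spectrum.mem_iff] at hν ⊢
    convert hν using 2
    rw [hBc, Algebra.algebraMap_eq_smul_one, Algebra.algebraMap_eq_smul_one, sub_smul]
    abel
  obtain ⟨t, r, htpos, hrpos, htr, hrs, ht2⟩ : ∃ t r : ℝ, 0 < t ∧ 0 < r ∧ t < r ∧ r < s ∧
      t ^ 2 = s ^ 2 - s * β + β ^ 2 / 4 :=
    ⟨s - β / 2, s - β / 4, by linarith, by linarith, by linarith, by linarith, by ring⟩
  have hband : ∀ ν ∈ spectrum ℂ Bc, ‖ν‖ ≤ t := by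
    intro ν hν
    have hμ := hshift ν hν
    have h1 : ‖ν - (s : ℂ)‖ ≤ R := hR _ hμ
    have h2 : ν.re - s ≤ -β := by
      have := hβ _ hμ; simpa using this
    have hn1 : ‖ν - (s : ℂ)‖ ^ 2 = (ν.re - s) ^ 2 + ν.im ^ 2 := by
      rw [Complex.sq_norm, Complex.normSq_apply]
      simp; ring
    have hn2 : ‖ν‖ ^ 2 = ν.re ^ 2 + ν.im ^ 2 := by
      rw [Complex.sq_norm, Complex.normSq_apply]; ring
    have hsq1 : ‖ν - (s : ℂ)‖ ^ 2 ≤ R ^ 2 := by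
      have := pow_le_pow_left₀ (norm_nonneg (ν - (s : ℂ))) h1 2
      simpa using this
    have hsq : ‖ν‖ ^ 2 ≤ t ^ 2 := by
      have hprod2 : s * ν.re ≤ s * s - s * β := by
        linarith [mul_le_mul_of_nonneg_left h2 hspos.le]
      have hn1' : ‖ν - (s : ℂ)‖ ^ 2 = ν.re ^ 2 - 2 * (s * ν.re) + s ^ 2 + ν.im ^ 2 := by
        rw [hn1]; ring
      linarith [hsq1, hn1', hn2, hsβ, hprod2, ht2, sq_nonneg β]
    have := Real.sqrt_le_sqrt hsq
    rwa [Real.sqrt_sq (norm_nonneg _), Real.sqrt_sq htpos.le] at this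
  have hρ : spectralRadius ℂ Bc < (r.toNNReal : ℝ≥0∞) := by
    have h1 : spectralRadius ℂ Bc ≤ (t.toNNReal : ℝ≥0∞) := by
      show (⨆ ν ∈ spectrum ℂ Bc, (‖ν‖₊ : ℝ≥0∞)) ≤ (t.toNNReal : ℝ≥0∞)
      refine iSup₂_le fun ν hν => ?_
      rw [ENNReal.coe_le_coe, ← norm_toNNReal]
      exact Real.toNNReal_le_toNNReal (hband ν hν)
    have h2 : (t.toNNReal : ℝ≥0∞) < (r.toNNReal : ℝ≥0∞) := by
      rw [ENNReal.coe_lt_coe]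
      exact (Real.toNNReal_lt_toNNReal_iff hrpos).mpr htr
    exact lt_of_le_of_lt h1 h2
  have hev := eventually_pow_nnnorm_le Bc hρ
  have hBpow : ∀ k : ℕ, ‖B ^ k‖ = ‖Bc ^ k‖ := by
    intro k
    rw [hBcdef, mapC_pow, ← coe_nnnorm, ← coe_nnnorm, nnnorm_map_complex]
  set y : Matrix (Fin n) (Fin n) ℝ := s⁻¹ • B with hydef
  have hynn : ∀ i j, 0 ≤ y i j := by
    intro i j
    rw [hydef]
    exact mul_nonneg (inv_nonneg.mpr hspos.le) (hBnn i j)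
  have hyk : ∀ k, ∀ i j, 0 ≤ (y ^ k) i j := fun k => pow_entries_nonneg hynn k
  have hsummable : Summable fun k : ℕ => y ^ k := by
    refine Summable.of_norm_bounded_eventually (g := fun k => (r / s) ^ k)
      (summable_geometric_of_lt_one (by positivity) (by rw [div_lt_one hspos]; exact hrs)) ?_
    rw [Nat.cofinite_eq_atTop]
    filter_upwards [hev] with k hk
    have h1 : ‖B ^ k‖ ≤ r ^ k := by
      rw [hBpow k, ← coe_nnnorm]
      calc (‖Bc ^ k‖₊ : ℝ) ≤ ((r.toNNReal ^ k : ℝ≥0) : ℝ) := by exact_mod_cast hk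
      _ = r ^ k := by rw [NNReal.coe_pow, Real.coe_toNNReal _ hrpos.le]
    have h2 : y ^ k = (s⁻¹) ^ k • B ^ k := by rw [hydef, smul_pow]
    rw [h2, norm_smul]
    have h3 : ‖(s⁻¹) ^ k‖ = (s⁻¹) ^ k := by
      rw [Real.norm_eq_abs, abs_of_nonneg (by positivity)]
    have h4 : (r / s) ^ k = s⁻¹ ^ k * r ^ k := by rw [div_pow]; ring
    rw [h3, h4]
    exact mul_le_mul_of_nonneg_left h1 (by positivity)
  set T := ∑' k : ℕ, y ^ k with hTdef
  obtain ⟨hL, hRt⟩ := geom_inv hsummable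
  have hTnn : ∀ i j, 0 ≤ T i j := by
    intro i j
    have hhs : HasSum (fun k => (y ^ k) i j) (T i j) := by
      have := hsummable.hasSum.mapL (entryCLM i j)
      exact this
    exact hhs.nonneg fun k => hyk k i j
  have hA' : A = (-s) • (1 - y) := by
    have hsy : s • y = B := by
      rw [hydef, smul_smul, mul_inv_cancel₀ (ne_of_gt hspos), one_smul]
    have : A = B - s • 1 := by rw [hBdef]; abel
    rw [this, ← hsy, neg_smul, smul_sub]
    abel
  refine ⟨s⁻¹ • T, ?_, ?_, ?_⟩
  · intro i j
    exact mul_nonneg (inv_nonneg.mpr hspos.le) (hTnn i j)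
  · have hc : (-s) * s⁻¹ = -1 := by field_simp
    rw [hA', smul_mul_assoc, mul_smul_comm, hTdef, show (1 - y) * ∑' k : ℕ, y ^ k = 1 from hL, smul_smul, hc, neg_smul, one_smul]
  · have hc : (-s) * s⁻¹ = -1 := by field_simp
    rw [hA', mul_smul_comm, smul_mul_assoc, hTdef, show (∑' k : ℕ, y ^ k) * (1 - y) = 1 from hRt, smul_smul, hc, neg_smul, one_smul]


lemma hurwitz_of_pos (A : Matrix (Fin n) (Fin n) ℝ) (hMz : IsMetzler A) (lam : Fin n → ℝ)
    (hpos : ∀ i, 0 < lam i) (hneg : ∀ i, A.mulVec lam i < 0) : IsHurwitz A := by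
  classical
  intro μ hμ
  set Ac : Matrix (Fin n) (Fin n) ℂ := A.map (fun x => (x : ℂ)) with hAcdef
  rw [spectrum.mem_iff] at hμ
  have hdet : (algebraMap ℂ (Matrix (Fin n) (Fin n) ℂ) μ - Ac).det = 0 := by
    by_contra h
    exact hμ ((Matrix.isUnit_iff_isUnit_det _).mpr (isUnit_iff_ne_zero.mpr h))
  obtain ⟨v, hv0, hv⟩ := (Matrix.exists_mulVec_eq_zero_iff).mpr hdet
  have hEig : Ac.mulVec v = μ • v := by
    have h1 : (algebraMap ℂ (Matrix (Fin n) (Fin n) ℂ) μ - Ac).mulVec v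
        = μ • v - Ac.mulVec v := by
      rw [Matrix.sub_mulVec, Algebra.algebraMap_eq_smul_one, Matrix.smul_mulVec,
        Matrix.one_mulVec]
    rw [h1] at hv
    linear_combination (norm := module) -hv
  obtain ⟨j0, hj0⟩ : ∃ j, v j ≠ 0 := Function.ne_iff.mp hv0
  obtain ⟨i0, _, hmax⟩ := Finset.exists_max_image Finset.univ (fun i => ‖v i‖ / lam i)
    ⟨j0, Finset.mem_univ j0⟩
  have hrpos : 0 < ‖v i0‖ / lam i0 :=
    lt_of_lt_of_le (div_pos (norm_pos_iff.mpr hj0) (hpos j0)) (hmax j0 (Finset.mem_univ j0))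
  set rr : ℝ := ‖v i0‖ / lam i0 with hrrdef
  have hvb : ∀ j, ‖v j‖ ≤ rr * lam j := by
    intro j
    have := hmax j (Finset.mem_univ j)
    rw [div_le_iff₀ (hpos j)] at this
    simpa [mul_comm] using this
  have hvi0 : ‖v i0‖ = rr * lam i0 := by
    rw [hrrdef, div_mul_cancel₀ _ (ne_of_gt (hpos i0))]
  obtain ⟨s, hspos, hdiag⟩ : ∃ s : ℝ, 0 < s ∧ ∀ i, 0 ≤ s + A i i := by
    refine ⟨1 + ∑ i, |A i i|, ?_, ?_⟩
    · have : 0 ≤ ∑ i, |A i i| := Finset.sum_nonneg fun _ _ => abs_nonneg _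
      linarith
    · intro i
      have h1 : |A i i| ≤ ∑ k, |A k k| :=
        Finset.single_le_sum (f := fun k => |A k k|) (fun _ _ => abs_nonneg _)
          (Finset.mem_univ i)
      have h2 := neg_abs_le (A i i)
      linarith
  set B : Matrix (Fin n) (Fin n) ℝ := A + s • 1 with hBdef
  have hBapp : ∀ i j, B i j = A i j + s * (if i = j then (1:ℝ) else 0) := by
    intro i j; simp [hBdef, Matrix.one_apply]
  have hBnn : ∀ i j, 0 ≤ B i j := by
    intro i j
    rw [hBapp]
    by_cases h : i = j
    · subst h; simp; linarith [hdiag i]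
    · simp [h]; exact hMz i j h
  -- eigen equation for B
  have hEigB : ∀ i, (μ + s) * v i = ∑ j, (B i j : ℂ) * v j := by
    intro i
    have h1 : Ac.mulVec v i = μ * v i := by rw [hEig]; simp
    have h2 : Ac.mulVec v i = ∑ j, (A i j : ℂ) * v j := by
      simp [Matrix.mulVec, dotProduct, hAcdef, Matrix.map_apply]
    have h3 : ∑ j, (B i j : ℂ) * v j = (∑ j, (A i j : ℂ) * v j) + s * v i := by
      have hterm : ∀ j, (B i j : ℂ) * v j
          = (A i j : ℂ) * v j + (if j = i then (s : ℂ) * v j else 0) := by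
        intro j
        rw [hBapp]
        by_cases h : i = j
        · subst h; simp; push_cast; ring
        · have h' : ¬ j = i := fun hh => h hh.symm
          simp [h, h']
      rw [Finset.sum_congr rfl (fun j _ => hterm j), Finset.sum_add_distrib,
        Finset.sum_ite_eq' Finset.univ i (fun j => (s : ℂ) * v j)]
      simp
    rw [h3, ← h2, h1]; ring
  have hrlpos : 0 < rr * lam i0 := mul_pos hrpos (hpos i0)
  have hmain : ‖μ + (s : ℂ)‖ * (rr * lam i0) < s * (rr * lam i0) := by
    have hBl : (B.mulVec lam) i0 < s * lam i0 := by
      have hbv : (B.mulVec lam) i0 = A.mulVec lam i0 + s * lam i0 := by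
        rw [hBdef, Matrix.add_mulVec, Matrix.smul_mulVec, Matrix.one_mulVec]
        simp
      rw [hbv]; linarith [hneg i0]
    calc ‖μ + (s : ℂ)‖ * (rr * lam i0) = ‖(μ + (s : ℂ)) * v i0‖ := by rw [norm_mul, hvi0]
    _ = ‖∑ j, (B i0 j : ℂ) * v j‖ := by rw [← hEigB i0]
    _ ≤ ∑ j, ‖(B i0 j : ℂ) * v j‖ := norm_sum_le _ _
    _ = ∑ j, B i0 j * ‖v j‖ := by
          refine Finset.sum_congr rfl fun j _ => ?_
          rw [norm_mul, Complex.norm_real, Real.norm_eq_abs, abs_of_nonneg (hBnn i0 j)]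
    _ ≤ ∑ j, B i0 j * (rr * lam j) :=
          Finset.sum_le_sum fun j _ => mul_le_mul_of_nonneg_left (hvb j) (hBnn i0 j)
    _ = rr * (B.mulVec lam) i0 := by
          simp only [Matrix.mulVec, dotProduct, Finset.mul_sum]
          exact Finset.sum_congr rfl fun j _ => by ring
    _ < rr * (s * lam i0) := by exact (mul_lt_mul_iff_right₀ hrpos).mpr hBl
    _ = s * (rr * lam i0) := by ring
  have h6 : ‖μ + (s : ℂ)‖ < s := lt_of_mul_lt_mul_right hmain hrlpos.le
  have h7 : μ.re + s ≤ ‖μ + (s : ℂ)‖ := by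
    have h8 := Complex.re_le_norm (μ + (s : ℂ))
    simpa using h8
  linarith

end S19

theorem stmt19 {n nu ny : ℕ} (A₀ : Matrix (Fin n) (Fin n) ℝ)
    (E : Matrix (Fin n) (Fin nu) ℝ) (C : Matrix (Fin ny) (Fin n) ℝ)
    (F : Matrix (Fin ny) (Fin nu) ℝ) (γ : ℝ) (hγ : 0 < γ)
    (hA₀ : IsMetzler A₀)
    (hE : ∀ i j, 0 ≤ E i j) (hC : ∀ i j, 0 ≤ C i j) (hF : ∀ i j, 0 ≤ F i j) :
    (IsHurwitz A₀ ∧ normInf (-(C * A₀⁻¹ * E) + F) < γ) ↔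
      ∃ lam : Fin n → ℝ, (∀ i, 0 < lam i) ∧
        (∀ i, A₀.mulVec lam i + E.mulVec (fun _ : Fin nu => (1 : ℝ)) i < 0) ∧
        (∀ i, C.mulVec lam i + F.mulVec (fun _ : Fin nu => (1 : ℝ)) i < γ) := by
  classical
  have hmv : ∀ {a b : ℕ} (P : Matrix (Fin a) (Fin b) ℝ) (v : Fin b → ℝ) (i : Fin a),
      P.mulVec v i = ∑ j, P i j * v j := fun P v i => rfl
  constructor
  · rintro ⟨hH, hnorm⟩
    obtain ⟨M, hMnn, hAM, hMA⟩ := S19.key A₀ hA₀ hH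
    have hAinv : A₀⁻¹ = -M := by
      apply Matrix.inv_eq_right_inv
      rw [Matrix.mul_neg, hAM, neg_neg]
    have hG : -(C * A₀⁻¹ * E) + F = C * M * E + F := by
      rw [hAinv, Matrix.mul_neg, Matrix.neg_mul, neg_neg]
    rw [hG] at hnorm
    set u : Fin n → ℝ := E.mulVec (fun _ => 1) with hudef
    have hunn : ∀ j, 0 ≤ u j := by
      intro j
      rw [hudef, hmv]
      exact Finset.sum_nonneg fun k _ => mul_nonneg (hE j k) (by norm_num)
    set G := C * M * E + F with hGdef
    have hGnn : ∀ i j, 0 ≤ G i j := fun i j => add_nonneg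
      (S19.mul_entries_nonneg (S19.mul_entries_nonneg hC hMnn) hE i j) (hF i j)
    have hrow : ∀ i, ∑ j, |G i j|
        = C.mulVec (M.mulVec u) i + F.mulVec (fun _ => 1) i := by
      intro i
      have h1 : ∑ j, |G i j| = ∑ j, G i j :=
        Finset.sum_congr rfl fun j _ => abs_of_nonneg (hGnn i j)
      rw [h1, hGdef]
      simp only [Matrix.add_apply, Finset.sum_add_distrib]
      congr 1
      · rw [hudef, Matrix.mulVec_mulVec, Matrix.mulVec_mulVec, hmv]
        simp [Matrix.mulVec, dotProduct]
      · rw [hmv]; simp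
    have hbdd : BddAbove {x | ∃ i : Fin ny, x = ∑ j, |G i j|} := by
      have he : {x | ∃ i : Fin ny, x = ∑ j, |G i j|}
          = Set.range (fun i => ∑ j, |G i j|) := by
        ext x; simp [eq_comm, Set.mem_range]
      rw [he]; exact (Set.finite_range _).bddAbove
    have hrowle : ∀ i, ∑ j, |G i j| ≤ normInf G := fun i => le_csSup hbdd ⟨i, rfl⟩
    have hrownz : ∀ i, ∃ j, 0 < M i j := by
      intro i
      by_contra h
      push_neg at h
      have hz : ∀ j, M i j = 0 := fun j => le_antisymm (h j) (hMnn i j)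
      have hzz : (M * A₀) i i = 0 := by
        rw [Matrix.mul_apply]
        exact Finset.sum_eq_zero fun k _ => by rw [hz k, zero_mul]
      rw [hMA] at hzz
      simp [Matrix.neg_apply, Matrix.one_apply] at hzz
    set w : Fin ny → ℝ := C.mulVec (M.mulVec (fun _ => 1)) with hwdef
    have hM1nn : ∀ j, 0 ≤ M.mulVec (fun _ => (1:ℝ)) j := by
      intro j; rw [hmv]
      exact Finset.sum_nonneg fun k _ => mul_nonneg (hMnn j k) (by norm_num)
    have hwnn : ∀ i, 0 ≤ w i := by
      intro i; rw [hwdef, hmv]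
      exact Finset.sum_nonneg fun k _ => mul_nonneg (hC i k) (hM1nn k)
    set c : ℝ := ∑ i, w i with hcdef
    have hc0 : 0 ≤ c := Finset.sum_nonneg fun i _ => hwnn i
    have hwc : ∀ i, w i ≤ c :=
      fun i => Finset.single_le_sum (f := fun i => w i) (fun k _ => hwnn k) (Finset.mem_univ i)
    set ε : ℝ := (γ - normInf G) / (2 * (c + 1)) with hεdef
    have hδ : 0 < γ - normInf G := by linarith
    have hεpos : 0 < ε := div_pos hδ (by linarith)
    have h9 : ε * (2 * (c + 1)) = γ - normInf G := by
      rw [hεdef]; field_simp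
    refine ⟨M.mulVec (fun j => u j + ε), ?_, ?_, ?_⟩
    · intro i
      rw [hmv]
      obtain ⟨j1, hj1⟩ := hrownz i
      refine Finset.sum_pos' (fun j _ => mul_nonneg (hMnn i j)
        (by linarith [hunn j, hεpos])) ?_
      exact ⟨j1, Finset.mem_univ j1, mul_pos hj1 (by linarith [hunn j1, hεpos])⟩
    · intro i
      have hAl : A₀.mulVec (M.mulVec (fun j => u j + ε)) i = -(u i + ε) := by
        rw [Matrix.mulVec_mulVec, hAM, Matrix.neg_mulVec, Matrix.one_mulVec]
        simp
      rw [hAl]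
      have h12 : E.mulVec (fun _ : Fin nu => (1:ℝ)) i = u i := rfl
      linarith [h12]
    · intro i
      have hCl : C.mulVec (M.mulVec (fun j => u j + ε)) i
          = C.mulVec (M.mulVec u) i + ε * w i := by
        have e1 : (fun j => u j + ε) = u + ε • (fun _ : Fin n => (1:ℝ)) := by
          funext j; simp
        rw [e1, Matrix.mulVec_add, Matrix.mulVec_smul, Matrix.mulVec_add, Matrix.mulVec_smul]
        rw [hwdef]
        simp
      rw [hCl]
      have h10 : C.mulVec (M.mulVec u) i + F.mulVec (fun _ => 1) i ≤ normInf G := by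
        rw [← hrow i]; exact hrowle i
      have h11 : ε * w i ≤ ε * c := mul_le_mul_of_nonneg_left (hwc i) hεpos.le
      linarith
  · rintro ⟨lam, hpos, h1, h2⟩
    have hAneg : ∀ i, A₀.mulVec lam i < 0 := by
      intro i
      have hE1 : 0 ≤ E.mulVec (fun _ : Fin nu => (1:ℝ)) i := by
        rw [hmv]
        exact Finset.sum_nonneg fun k _ => mul_nonneg (hE i k) (by norm_num)
      linarith [h1 i]
    have hH := S19.hurwitz_of_pos A₀ hA₀ lam hpos hAneg
    obtain ⟨M, hMnn, hAM, hMA⟩ := S19.key A₀ hA₀ hH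
    have hAinv : A₀⁻¹ = -M := by
      apply Matrix.inv_eq_right_inv
      rw [Matrix.mul_neg, hAM, neg_neg]
    have hG : -(C * A₀⁻¹ * E) + F = C * M * E + F := by
      rw [hAinv, Matrix.mul_neg, Matrix.neg_mul, neg_neg]
    set u : Fin n → ℝ := E.mulVec (fun _ => 1) with hudef
    set G := C * M * E + F with hGdef
    have hGnn : ∀ i j, 0 ≤ G i j := fun i j => add_nonneg
      (S19.mul_entries_nonneg (S19.mul_entries_nonneg hC hMnn) hE i j) (hF i j)
    have hrow : ∀ i, ∑ j, |G i j|
        = C.mulVec (M.mulVec u) i + F.mulVec (fun _ => 1) i := by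
      intro i
      have hA1 : ∑ j, |G i j| = ∑ j, G i j :=
        Finset.sum_congr rfl fun j _ => abs_of_nonneg (hGnn i j)
      rw [hA1, hGdef]
      simp only [Matrix.add_apply, Finset.sum_add_distrib]
      congr 1
      · rw [hudef, Matrix.mulVec_mulVec, Matrix.mulVec_mulVec, hmv]
        simp [Matrix.mulVec, dotProduct]
      · rw [hmv]; simp
    have hMu_le : ∀ i, M.mulVec u i ≤ lam i := by
      intro i
      have e1 : M.mulVec (A₀.mulVec lam) = -lam := by
        rw [Matrix.mulVec_mulVec, hMA, Matrix.neg_mulVec, Matrix.one_mulVec]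
      have e2 : ∑ j, M i j * (-(A₀.mulVec lam j + u j))
          = -(∑ j, M i j * A₀.mulVec lam j) - ∑ j, M i j * u j := by
        rw [← Finset.sum_neg_distrib, ← Finset.sum_sub_distrib]
        exact Finset.sum_congr rfl fun j _ => by ring
      have e3 : lam i - M.mulVec u i = ∑ j, M i j * (-(A₀.mulVec lam j + u j)) := by
        rw [e2, hmv M u i]
        have e4 : ∑ j, M i j * A₀.mulVec lam j = M.mulVec (A₀.mulVec lam) i := (hmv _ _ _).symm
        rw [e4, e1]
        simp
      have e5 : 0 ≤ lam i - M.mulVec u i := by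
        rw [e3]
        refine Finset.sum_nonneg fun j _ => mul_nonneg (hMnn i j) ?_
        have := h1 j
        rw [hudef]
        linarith
      linarith
    have hrowlt : ∀ i, ∑ j, |G i j| < γ := by
      intro i
      rw [hrow i]
      have hCle : C.mulVec (M.mulVec u) i ≤ C.mulVec lam i := by
        rw [hmv, hmv]
        exact Finset.sum_le_sum fun j _ => mul_le_mul_of_nonneg_left (hMu_le j) (hC i j)
      linarith [h2 i]
    refine ⟨hH, ?_⟩
    rw [hG]
    rcases isEmpty_or_nonempty (Fin ny) with hny | hny
    · have he : {x | ∃ i : Fin ny, x = ∑ j, |G i j|} = ∅ := by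
        ext x; simp
      rw [normInf, he, Real.sSup_empty]
      exact hγ
    · have hfin : ({x | ∃ i : Fin ny, x = ∑ j, |G i j|}).Finite := by
        have he : {x | ∃ i : Fin ny, x = ∑ j, |G i j|}
            = Set.range (fun i => ∑ j, |G i j|) := by
          ext x; simp [eq_comm, Set.mem_range]
        rw [he]; exact Set.finite_range _
      have hne : ({x | ∃ i : Fin ny, x = ∑ j, |G i j|}).Nonempty :=
        ⟨∑ j, |G (Classical.arbitrary (Fin ny)) j|, ⟨Classical.arbitrary (Fin ny), rfl⟩⟩
      obtain ⟨i, hi⟩ := hne.csSup_mem hfin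
      rw [normInf, hi]
      exact hrowlt i
end
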